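/- arXiv:2402.08525 — 10 statements merged into one kernel-verified Lean document; each statement's English description precedes it below -/
import Mathlib

section
/- The Kempner-type series K = Σ_{n admissible, n>0} 1/n converges, i.e. the function n ↦ 1/n is summable over the set of positive admissible integers. -/
open MeasureTheory

def Admissible (b : ℕ) (A : Finset ℕ) (n : ℕ) : Prop :=
  (∀ d ∈ Nat.digits b n, d ∈ A) ∧ (n = 0 → 0 ∈ A)

instance (b : ℕ) (A : Finset ℕ) (n : ℕ) : Decidable (Admissible b A n) := by
  unfold Admissible
  infer_instance

noncomputable def kempnerMeasure (b : ℕ) (A : Finset ℕ) : Measure ℝ :=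
  if 0 ∈ A then
    Measure.sum fun l : ℕ =>
      ((b : ENNReal) ^ l)⁻¹ •
        Measure.sum fun n : {n : ℕ // Admissible b A n} =>
          Measure.dirac (((n : ℕ) : ℝ) / (b : ℝ) ^ l)
  else
    Measure.dirac 0 +
      Measure.sum fun l : ℕ =>
        ((b : ENNReal) ^ l)⁻¹ •
          Measure.sum
            (fun n : {n : ℕ // Admissible b A n ∧ l ≤ (Nat.digits b n).length} =>
              Measure.dirac (((n : ℕ) : ℝ) / (b : ℝ) ^ l))

noncomputable def moment (b : ℕ) (A : Finset ℕ) (m : ℕ) : ℝ :=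
  ∫ x in Set.Ico (0 : ℝ) 1, x ^ m ∂(kempnerMeasure b A)

noncomputable def kempnerSum (b : ℕ) (A : Finset ℕ) : ℝ :=
  ∑' n : {n : ℕ // 0 < n ∧ Admissible b A n}, (1 : ℝ) / ((n : ℕ) : ℝ)

/-!
Sending a positive integer to its word of base-`b` digits is injective, and the word of `n` has
length `l` with `b ^ l ≤ b * n`. So the series is dominated by `∑ b * b⁻¹ ^ l` over all words over
`A`, which groups by length into the geometric series `∑ₗ b * (#A / b) ^ l`, convergent as
`#A < b`.
-/

theorem summable_pow_length_of_card_mul_lt_one {α : Type*} [Fintype α] {r : ℝ} (hr : 0 ≤ r)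
    (hαr : Fintype.card α * r < 1) :
    Summable fun w : Σ l, Fin l → α => r ^ w.1 := by
  refine (summable_sigma_of_nonneg fun _ => pow_nonneg hr _).mpr
    ⟨fun _ => .of_finite, ?_⟩
  have words_of_length (l : ℕ) : ∑' _ : Fin l → α, r ^ l = (Fintype.card α * r) ^ l := by
    simp [tsum_fintype, mul_pow]
  simp only [words_of_length]
  exact summable_geometric_of_lt_one (by positivity) hαr

def digitWord (b : ℕ) (A : Finset ℕ) (n : {n : ℕ // ∀ d ∈ b.digits n, d ∈ A}) :
    Σ l, Fin l → A :=
  ⟨(b.digits n).length, fun i => ⟨(b.digits n)[i], n.2 _ (List.getElem_mem _)⟩⟩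

theorem digitWord_injective (b : ℕ) (A : Finset ℕ) : Function.Injective (digitWord b A) := by
  have ofFn_digitWord (n) : List.ofFn (fun i => ((digitWord b A n).2 i : ℕ)) = b.digits n :=
    List.ofFn_getElem
  intro m n h
  apply Subtype.ext
  apply Nat.digits.injective b
  rw [← ofFn_digitWord m, ← ofFn_digitWord n, h]

theorem one_div_le_mul_inv_pow_length_digits {b n : ℕ} (hb : 1 < b) (hn : 0 < n) :
    (1 : ℝ) / n ≤ b * (b : ℝ)⁻¹ ^ (b.digits n).length := by
  have hpow : (b : ℝ) ^ (b.digits n).length ≤ b * n := by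
    exact_mod_cast Nat.base_pow_length_digits_le b n hb hn.ne'
  rw [inv_pow, ← div_eq_mul_inv, div_le_div_iff₀ (by positivity) (by positivity)]
  linarith

theorem kempner_summable_general (b : ℕ) (hb : 1 < b) (A : Finset ℕ)
    (hA : A ⊂ Finset.range b) :
    Summable (fun n : {n : ℕ // 0 < n ∧ Admissible b A n} => (1 : ℝ) / ((n : ℕ) : ℝ)) := by
  have hcard : (A.card : ℝ) * (b : ℝ)⁻¹ < 1 := by
    have : A.card < b := by simpa using Finset.card_lt_card hA
    rw [← div_eq_mul_inv, div_lt_one (by positivity)]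
    exact_mod_cast this
  have hwords := summable_pow_length_of_card_mul_lt_one (α := A) (r := (b : ℝ)⁻¹)
    (by positivity) (by rwa [Fintype.card_coe])
  have hinj : Function.Injective fun n : {n : ℕ // 0 < n ∧ Admissible b A n} =>
      digitWord b A ⟨n, n.2.2.1⟩ :=
    (digitWord_injective b A).comp (Subtype.impEmbedding _ _ fun _ hn => hn.2.1).injective
  refine .of_nonneg_of_le (fun _ => by positivity) (fun n => ?_)
    ((hwords.mul_left (b : ℝ)).comp_injective hinj)
  exact one_div_le_mul_inv_pow_length_digits hb n.2.1

theorem kempner_summable (b : ℕ) (hb : 1 < b) (A : Finset ℕ)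
    (hA : A ⊂ Finset.range b) (hAne : A.Nonempty) (hA0 : A ≠ {0}) :
    Summable (fun n : {n : ℕ // 0 < n ∧ Admissible b A n} => (1 : ℝ) / ((n : ℕ) : ℝ)) :=
  kempner_summable_general b hb A hA
end

section
/- The contribution of the l-th block of the Kempner series is bounded: for every l ≥ 1, Σ_{n admissible, b^{l−1} ≤ n < b^l} 1/n ≤ N₁ · N^{l−1} · b^{−(l−1)}, where N₁ = #(A∖{0}). -/
open MeasureTheory

/-!
An admissible number with `k + 1` digits is determined by its first `k` digits, an admissible
number with `k` digits, and its last digit, an element of `A`; a one-digit admissible number is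
an element of `A ∖ {0}`. Hence the `l`-th block has at most `N₁ N^(l-1)` elements, each at least
`b^(l-1)`, so each contributes at most `b^-(l-1)` to the sum.
-/

open Finset

namespace Admissible

variable {b : ℕ} {A : Finset ℕ} {n : ℕ}

theorem mod_mem (hb : 1 < b) (h : Admissible b A n) (hn : 0 < n) : n % b ∈ A :=
  h.1 _ (by rw [Nat.digits_def' hb hn]; exact List.mem_cons_self)

theorem div (hb : 1 < b) (h : Admissible b A n) (hn : 0 < n / b) : Admissible b A (n / b) :=
  ⟨fun d hd => h.1 d (by rw [Nat.digits_def' hb (Nat.pos_of_div_pos hn)]; exact .tail _ hd),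
    fun h0 => absurd h0 hn.ne'⟩

end Admissible

/-- The `l`-th block of the paper, for `l = k + 1`: admissible numbers with exactly `k + 1` digits. -/
def admissibleBlock (b : ℕ) (A : Finset ℕ) (k : ℕ) : Finset ℕ :=
  {n ∈ Ico (b ^ k) (b ^ (k + 1)) | Admissible b A n}

section admissibleBlock

variable {b : ℕ} {A : Finset ℕ}

theorem admissibleBlock_zero_subset (hb : 1 < b) : admissibleBlock b A 0 ⊆ A.erase 0 := by
  intro n hn
  simp only [admissibleBlock, mem_filter, mem_Ico, pow_zero, zero_add, pow_one] at hn
  obtain ⟨⟨hn1, hnb⟩, hadm⟩ := hn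
  have := hadm.mod_mem hb hn1
  rw [Nat.mod_eq_of_lt hnb] at this
  exact mem_erase.2 ⟨by omega, this⟩

theorem mapsTo_divMod_admissibleBlock_succ (hb : 1 < b) (k : ℕ) :
    Set.MapsTo (fun n => (n / b, n % b)) (admissibleBlock b A (k + 1))
      (admissibleBlock b A k ×ˢ A : Finset (ℕ × ℕ)) := by
  intro n hn
  simp only [admissibleBlock, mem_coe, mem_filter, mem_Ico] at hn
  obtain ⟨⟨hlo, hhi⟩, hadm⟩ := hn
  have hb0 : 0 < b := by omega
  have hlo' : b ^ k ≤ n / b := (Nat.le_div_iff_mul_le hb0).2 (by rwa [← pow_succ])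
  have hhi' : n / b < b ^ (k + 1) := Nat.div_lt_of_lt_mul (by rwa [mul_comm, ← pow_succ])
  have hdiv : 0 < n / b := lt_of_lt_of_le (Nat.pow_pos hb0) hlo'
  exact mem_coe.2 <| mem_product.2
    ⟨mem_filter.2 ⟨mem_Ico.2 ⟨hlo', hhi'⟩, hadm.div hb hdiv⟩,
      hadm.mod_mem hb (Nat.pos_of_div_pos hdiv)⟩

theorem card_admissibleBlock_succ_le (hb : 1 < b) (k : ℕ) :
    #(admissibleBlock b A (k + 1)) ≤ #(admissibleBlock b A k) * #A := by
  rw [← card_product]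
  refine card_le_card_of_injOn _ (mapsTo_divMod_admissibleBlock_succ hb k) ?_
  intro n _ m _ h
  simp only [Prod.mk.injEq] at h
  rw [← Nat.div_add_mod n b, ← Nat.div_add_mod m b, h.1, h.2]

theorem card_admissibleBlock_le (hb : 1 < b) (k : ℕ) :
    #(admissibleBlock b A k) ≤ #(A.erase 0) * #A ^ k := by
  induction k with
  | zero => simpa using card_le_card (admissibleBlock_zero_subset hb)
  | succ k ih =>
    calc #(admissibleBlock b A (k + 1)) ≤ #(admissibleBlock b A k) * #A :=
          card_admissibleBlock_succ_le hb k
      _ ≤ #(A.erase 0) * #A ^ k * #A := Nat.mul_le_mul_right _ ih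
      _ = #(A.erase 0) * #A ^ (k + 1) := by ring

theorem sum_inv_admissibleBlock_le (hb : 1 < b) (k : ℕ) :
    ∑ n ∈ admissibleBlock b A k, (1 : ℝ) / n ≤ #(A.erase 0) * (#A : ℝ) ^ k * ((b : ℝ) ^ k)⁻¹ := by
  have hterm : ∀ n ∈ admissibleBlock b A k, (1 : ℝ) / n ≤ ((b : ℝ) ^ k)⁻¹ := by
    intro n hn
    simp only [admissibleBlock, mem_filter, mem_Ico] at hn
    rw [one_div]
    exact inv_anti₀ (by positivity) (by exact_mod_cast hn.1.1)
  calc ∑ n ∈ admissibleBlock b A k, (1 : ℝ) / n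
      ≤ #(admissibleBlock b A k) * ((b : ℝ) ^ k)⁻¹ := by
        simpa using sum_le_card_nsmul _ _ _ hterm
    _ ≤ #(A.erase 0) * (#A : ℝ) ^ k * ((b : ℝ) ^ k)⁻¹ := by
        gcongr
        exact_mod_cast card_admissibleBlock_le hb k

end admissibleBlock

theorem kempner_block_bound_general (b : ℕ) (hb : 1 < b) (A : Finset ℕ)
    (l : ℕ) (hl : 1 ≤ l) :
    ∑ n ∈ (Finset.range (b ^ l)).filter (fun n => Admissible b A n ∧ b ^ (l - 1) ≤ n),
        (1 : ℝ) / (n : ℝ)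
      ≤ ((A.erase 0).card : ℝ) * (A.card : ℝ) ^ (l - 1) * ((b : ℝ) ^ (l - 1))⁻¹ := by
  obtain ⟨k, rfl⟩ : ∃ k, l = k + 1 := ⟨l - 1, by omega⟩
  have hblock : (range (b ^ (k + 1))).filter (fun n => Admissible b A n ∧ b ^ k ≤ n) =
      admissibleBlock b A k := by
    ext n
    simp only [admissibleBlock, mem_filter, mem_range, mem_Ico]
    tauto
  simpa [hblock] using sum_inv_admissibleBlock_le hb k

theorem kempner_block_bound (b : ℕ) (hb : 1 < b) (A : Finset ℕ)
    (hA : A ⊂ Finset.range b) (hAne : A.Nonempty) (hA0 : A ≠ {0})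
    (l : ℕ) (hl : 1 ≤ l) :
    ∑ n ∈ (Finset.range (b ^ l)).filter (fun n => Admissible b A n ∧ b ^ (l - 1) ≤ n),
        (1 : ℝ) / (n : ℝ)
      ≤ ((A.erase 0).card : ℝ) * (A.card : ℝ) ^ (l - 1) * ((b : ℝ) ^ (l - 1))⁻¹ :=
  kempner_block_bound_general b hb A l hl
end

section
/- The Kempner sum equals the integral of 1/x over the interval [1/b, 1) against μ: ∫_{[1/b,1)} x^{−1} dμ(x) = K. -/
/-! An admissible `n > 0` with `L` digits lies in `[1/b, 1)` after division by `b ^ l` exactly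
when `l = L`, and the atom of `μ` there has weight `b ^ (-L)`; so `n` contributes
`b ^ (-L) * (n / b ^ L)⁻¹ = 1 / n` to the integral. The extra atoms present when `0 ∉ A` (the point
`0`, and the restriction `l ≤ L`) do not change this. Working in `ℝ≥0∞`, all double sums can be
swapped freely. -/

open MeasureTheory

open Set
open scoped ENNReal

section

variable {b : ℕ}

lemma div_pow_mem_Ico_inv_one_iff (hb : 1 < b) {n : ℕ} (hn : n ≠ 0) (l : ℕ) :
    (n : ℝ) / (b : ℝ) ^ l ∈ Ico (b : ℝ)⁻¹ 1 ↔ l = (Nat.digits b n).length := by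
  have hb0 : (0 : ℝ) < b := by positivity
  have hbl : (0 : ℝ) < (b : ℝ) ^ l := by positivity
  have hlower : (b : ℝ)⁻¹ ≤ n / (b : ℝ) ^ l ↔ l ≤ (Nat.digits b n).length := by
    rw [inv_le_iff_one_le_mul₀ hb0, div_mul_eq_mul_div, one_le_div hbl, Nat.le_iff_lt_add_one,
      ← List.length_cons (a := 0), ← Nat.digits_base_mul hb (Nat.pos_of_ne_zero hn),
      Nat.lt_digits_length_iff hb, mul_comm b]
    exact_mod_cast Iff.rfl
  have hupper : (n : ℝ) / (b : ℝ) ^ l < 1 ↔ (Nat.digits b n).length ≤ l := by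
    rw [div_lt_one hbl, Nat.digits_length_le_iff hb]
    exact_mod_cast Iff.rfl
  rw [mem_Ico, hlower, hupper, le_antisymm_iff]

lemma inv_pow_mul_indicator_inv_div_pow (hb : 1 < b) (n l : ℕ) :
    ((b : ℝ≥0∞) ^ l)⁻¹ *
        (Ico (b : ℝ)⁻¹ 1).indicator (fun x => ENNReal.ofReal x⁻¹) ((n : ℝ) / (b : ℝ) ^ l) =
      if l = (Nat.digits b n).length then ENNReal.ofReal (n : ℝ)⁻¹ else 0 := by
  rcases eq_or_ne n 0 with rfl | hn
  · simp
  split_ifs with hl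
  · have hbl : (b : ℝ≥0∞) ^ l ≠ 0 := pow_ne_zero _ (by exact_mod_cast (by omega : b ≠ 0))
    rw [indicator_of_mem ((div_pow_mem_Ico_inv_one_iff hb hn l).2 hl), inv_div, div_eq_mul_inv,
      ENNReal.ofReal_mul (by positivity), ENNReal.ofReal_pow (by positivity),
      ENNReal.ofReal_natCast, ENNReal.inv_mul_cancel_left hbl (by simp)]
  · rw [indicator_of_notMem (mt (div_pow_mem_Ico_inv_one_iff hb hn l).1 hl), mul_zero]

lemma lintegral_indicator_inv_sum_dirac_div_pow (hb : 1 < b) (P : ℕ → ℕ → Prop) :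
    ∫⁻ x, (Ico (b : ℝ)⁻¹ 1).indicator (fun x => ENNReal.ofReal x⁻¹) x
        ∂(Measure.sum fun l : ℕ => ((b : ℝ≥0∞) ^ l)⁻¹ •
          Measure.sum fun n : {n : ℕ // P l n} => Measure.dirac (((n : ℕ) : ℝ) / (b : ℝ) ^ l)) =
      ∑' n : ℕ, {n | P (Nat.digits b n).length n}.indicator (fun n => ENNReal.ofReal (n : ℝ)⁻¹) n := by
  simp only [lintegral_sum_measure, lintegral_smul_measure, lintegral_dirac, smul_eq_mul,
    ← ENNReal.tsum_mul_left, inv_pow_mul_indicator_inv_div_pow hb]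
  refine (tsum_congr fun l => tsum_subtype {n | P l n} fun n =>
    if l = (Nat.digits b n).length then ENNReal.ofReal (n : ℝ)⁻¹ else 0).trans ?_
  rw [ENNReal.tsum_comm]
  refine tsum_congr fun n => (tsum_eq_single (Nat.digits b n).length fun l hl => ?_).trans ?_
  · exact indicator_apply_eq_zero.2 fun _ => if_neg hl
  · classical
    simp [indicator_apply]

lemma lintegral_indicator_inv_kempnerMeasure (hb : 1 < b) (A : Finset ℕ) :
    ∫⁻ x, (Ico (b : ℝ)⁻¹ 1).indicator (fun x => ENNReal.ofReal x⁻¹) x ∂kempnerMeasure b A =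
      ∑' n : ℕ, {n | Admissible b A n}.indicator (fun n => ENNReal.ofReal (n : ℝ)⁻¹) n := by
  rw [kempnerMeasure]
  split_ifs
  · exact lintegral_indicator_inv_sum_dirac_div_pow hb fun _ n => Admissible b A n
  · rw [lintegral_add_measure, lintegral_dirac,
      lintegral_indicator_inv_sum_dirac_div_pow hb fun l n =>
        Admissible b A n ∧ l ≤ (Nat.digits b n).length,
      indicator_apply_eq_zero.2 fun _ => by simp, zero_add]
    simp

lemma kempnerSum_eq_tsum_indicator (A : Finset ℕ) :
    kempnerSum b A = ∑' n : ℕ, {n | Admissible b A n}.indicator (fun n => (n : ℝ)⁻¹) n := by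
  refine (tsum_subtype {n | 0 < n ∧ Admissible b A n} fun n => 1 / (n : ℝ)).trans
    (tsum_congr fun n => ?_)
  rcases eq_or_ne n 0 with rfl | hn
  · simp [indicator_apply]
  · simp [indicator_apply, Nat.pos_of_ne_zero hn]

end

theorem kempner_sum_as_integral_general (b : ℕ) (hb : 1 < b) (A : Finset ℕ) :
    ∫ x in Set.Ico ((b : ℝ)⁻¹) 1, x⁻¹ ∂(kempnerMeasure b A) = kempnerSum b A := by
  have hinv_nonneg : 0 ≤ᵐ[(kempnerMeasure b A).restrict (Ico (b : ℝ)⁻¹ 1)] fun x => x⁻¹ :=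
    ae_restrict_of_forall_mem measurableSet_Ico fun x hx =>
      inv_nonneg.2 ((inv_nonneg.2 b.cast_nonneg).trans hx.1)
  rw [integral_eq_lintegral_of_nonneg_ae hinv_nonneg measurable_inv.aestronglyMeasurable,
    ← lintegral_indicator measurableSet_Ico, lintegral_indicator_inv_kempnerMeasure hb,
    ENNReal.tsum_toReal_eq fun n => by
      by_cases hn : Admissible b A n <;> simp [hn], kempnerSum_eq_tsum_indicator]
  refine tsum_congr fun n => ?_
  by_cases hn : Admissible b A n <;> simp [hn]

theorem kempner_sum_as_integral (b : ℕ) (hb : 1 < b) (A : Finset ℕ)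
    (hA : A ⊂ Finset.range b) (hAne : A.Nonempty) (hA0 : A ≠ {0}) :
    ∫ x in Set.Ico ((b : ℝ)⁻¹) 1, x⁻¹ ∂(kempnerMeasure b A) = kempnerSum b A :=
  kempner_sum_as_integral_general b hb A
end

section
/- For every positive integer n, the restriction of μ to the interval [n, n+1) is the zero measure if n is not admissible, and is the pushforward under translation by n of the restriction of μ to [0,1) if n is admissible. -/
open MeasureTheory

/-! Sort the atoms of μ by level: the level-`l` atoms are the points `m / b^l` of weight `b^(-l)`.
Both cases of the definition are the single formula `μ = ∑ₗ b^(-l) ∑_{m ∈ Pₗ} δ_{m/b^l}`, where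
`m ∈ Pₗ` means that the digits of `m`, padded with zeros to length `l`, lie in `A` (when `0 ∉ A`,
the extra atom `δ₀` is the level-0 atom of the empty digit string). A level-`l` atom in `[n, n+1)`
is `(n b^l + r) / b^l` with `r < b^l`, and the digits of `n b^l + r` are the padded digits of `r`
followed by those of `n`. So for `n > 0` it is an atom iff `n` is admissible and `r ∈ Pₗ`, that is,
iff `r / b^l` is a level-`l` atom in `[0, 1)`. -/

open Set

namespace MeasureTheory.Measure

variable {α ι : Type*} [MeasurableSpace α]

lemma restrict_sum_dirac_subtype (p : ι → Prop) (x : ι → α) {s : Set α} (hs : MeasurableSet s) :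
    (sum fun i : {i // p i} => dirac (x i)).restrict s =
      sum fun i : {i // p i ∧ x i ∈ s} => dirac (x i) := by
  classical
  ext t ht
  erw [restrict_apply ht, sum_apply _ (ht.inter hs), sum_apply _ ht,
    tsum_subtype {i | p i} (fun i => dirac (x i) (t ∩ s)),
    tsum_subtype {i | p i ∧ x i ∈ s} (fun i => dirac (x i) t)]
  refine tsum_congr fun i => ?_
  simp only [indicator, mem_ofPred_eq, dirac_apply' _ ht, dirac_apply' _ (ht.inter hs),
    mem_inter_iff, Pi.one_apply]
  by_cases hi : p i <;> by_cases hxs : x i ∈ s <;> simp [hi, hxs]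

lemma map_sum_dirac {β : Type*} [MeasurableSpace β] {f : α → β} (hf : Measurable f)
    (x : ι → α) :
    (sum fun i => dirac (x i)).map f = sum fun i => dirac (f (x i)) := by
  simp only [map_sum hf.aemeasurable, map_dirac' hf]

lemma sum_subtype_eq_add (μ : ι → Measure α) {p : ι → Prop} {a : ι} (ha : p a) :
    sum (fun i : {i // p i} => μ i) = μ a + sum fun i : {i // p i ∧ i ≠ a} => μ i := by
  classical
  ext s hs
  erw [add_apply, sum_apply _ hs, sum_apply _ hs,
    tsum_subtype {i | p i} (fun i => μ i s), tsum_subtype {i | p i ∧ i ≠ a} (fun i => μ i s),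
    ENNReal.tsum_eq_add_tsum_ite a, indicator_of_mem (show a ∈ {i | p i} from ha)]
  congr 1
  refine tsum_congr fun i => ?_
  by_cases hi : i = a <;> simp [indicator, hi]

lemma sum_subtype_congr (μ : ι → Measure α) {p q : ι → Prop} (h : ∀ i, p i ↔ q i) :
    sum (fun i : {i // p i} => μ i) = sum fun i : {i // q i} => μ i :=
  sum_comp_equiv (Equiv.subtypeEquivRight h) fun i => μ i

lemma sum_nat_eq_add (μ : ℕ → Measure α) : sum μ = μ 0 + sum fun l => μ (l + 1) := by
  ext s hs
  rw [add_apply, sum_apply _ hs, sum_apply _ hs]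
  exact tsum_eq_zero_add' ENNReal.summable

end MeasureTheory.Measure

lemma Nat.cast_div_mem_Ico_iff {K : Type*} [Field K] [LinearOrder K] [IsStrictOrderedRing K]
    {k : ℕ} (hk : 0 < k) (m n : ℕ) :
    (m : K) / k ∈ Ico (n : K) (n + 1) ↔ n * k ≤ m ∧ m < n * k + k := by
  have hk' : (0 : K) < k := by exact_mod_cast hk
  rw [mem_Ico, le_div_iff₀ hk', div_lt_iff₀ hk', add_mul, one_mul]
  norm_cast

section Digits

variable {b : ℕ} {A : Finset ℕ}

/-- `m / b ^ l`, written with exactly `l` digits after the point and no leading zero before it,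
uses only digits from `A`. -/
def PaddedAdmissible (b : ℕ) (A : Finset ℕ) (l m : ℕ) : Prop :=
  ∀ d ∈ Nat.digits b m ++ List.replicate (l - (Nat.digits b m).length) 0, d ∈ A

lemma admissible_iff_of_pos {n : ℕ} (hn : 0 < n) :
    Admissible b A n ↔ ∀ d ∈ Nat.digits b n, d ∈ A := by
  simp [Admissible, hn.ne']

lemma paddedAdmissible_iff_admissible (h0 : 0 ∈ A) {l m : ℕ} :
    PaddedAdmissible b A l m ↔ Admissible b A m := by
  simp +contextual [PaddedAdmissible, Admissible, List.mem_replicate, h0, or_imp]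

lemma paddedAdmissible_iff_of_zero_notMem (h0 : 0 ∉ A) {l m : ℕ} :
    PaddedAdmissible b A l m ↔
      (∀ d ∈ Nat.digits b m, d ∈ A) ∧ l ≤ (Nat.digits b m).length := by
  simp only [PaddedAdmissible, List.mem_append, List.mem_replicate, or_imp, forall_and]
  refine and_congr_right fun _ => ⟨fun h => ?_, ?_⟩
  · by_contra hl
    exact h0 (h 0 ⟨by omega, rfl⟩)
  · rintro hl d ⟨hd, -⟩
    omega

lemma paddedAdmissible_mul_pow_add_iff (hb : 1 < b) {l n r : ℕ} (hn : 0 < n) (hr : r < b ^ l) :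
    PaddedAdmissible b A l (n * b ^ l + r) ↔ Admissible b A n ∧ PaddedAdmissible b A l r := by
  have hlen : (Nat.digits b r).length ≤ l := (Nat.digits_length_le_iff hb r).2 hr
  have hdigits : Nat.digits b (n * b ^ l + r) =
      Nat.digits b r ++ List.replicate (l - (Nat.digits b r).length) 0 ++ Nat.digits b n := by
    rw [Nat.digits_append_zeroes_append_digits hb hn, Nat.add_sub_cancel' hlen, add_comm,
      mul_comm]
  have hpad : l - (Nat.digits b (n * b ^ l + r)).length = 0 := by
    rw [hdigits]
    simp only [List.length_append, List.length_replicate]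
    omega
  rw [PaddedAdmissible, hpad, List.replicate_zero, List.append_nil, hdigits,
    admissible_iff_of_pos hn]
  simp only [List.forall_mem_append, PaddedAdmissible]
  exact and_comm

end Digits

section LevelMeasure

variable {b : ℕ} {A : Finset ℕ}

noncomputable def levelMeasure (b : ℕ) (A : Finset ℕ) (l : ℕ) : Measure ℝ :=
  Measure.sum fun m : {m // PaddedAdmissible b A l m} => Measure.dirac ((m : ℝ) / (b : ℝ) ^ l)

lemma kempnerMeasure_eq_sum_levelMeasure :
    kempnerMeasure b A = Measure.sum fun l => ((b : ENNReal) ^ l)⁻¹ • levelMeasure b A l := by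
  unfold kempnerMeasure levelMeasure
  split_ifs with h0
  · have hP : ∀ l, PaddedAdmissible b A l = Admissible b A :=
      fun l => funext fun m => propext (paddedAdmissible_iff_admissible h0)
    congr 1
    funext l
    rw [hP l]
  · have hlevel0 : ∀ m, PaddedAdmissible b A 0 m ∧ m ≠ 0 ↔
        Admissible b A m ∧ 0 ≤ (Nat.digits b m).length := fun m => by
      simp [paddedAdmissible_iff_of_zero_notMem h0, Admissible, h0]
    have hlevel : ∀ l m, PaddedAdmissible b A (l + 1) m ↔
        Admissible b A m ∧ l + 1 ≤ (Nat.digits b m).length := fun l m => by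
      rw [paddedAdmissible_iff_of_zero_notMem h0, Admissible]
      rcases m with _ | m <;> simp
    rw [Measure.sum_nat_eq_add]
    conv_rhs => rw [Measure.sum_nat_eq_add]
    rw [pow_zero, inv_one, one_smul, one_smul,
      Measure.sum_subtype_eq_add (fun m : ℕ => Measure.dirac ((m : ℝ) / (b : ℝ) ^ 0))
        (show PaddedAdmissible b A 0 0 by simp [PaddedAdmissible]),
      Nat.cast_zero, zero_div, add_assoc,
      Measure.sum_subtype_congr (fun m : ℕ => Measure.dirac ((m : ℝ) / (b : ℝ) ^ 0)) hlevel0]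
    simp_rw [fun l => Measure.sum_subtype_congr
      (fun m : ℕ => Measure.dirac ((m : ℝ) / (b : ℝ) ^ (l + 1))) (hlevel l)]

lemma levelMeasure_restrict_Ico (hb : 0 < b) (l n : ℕ) :
    (levelMeasure b A l).restrict (Ico (n : ℝ) (n + 1)) =
      Measure.sum fun r : {r // PaddedAdmissible b A l (n * b ^ l + r) ∧ r < b ^ l} =>
        Measure.dirac ((r : ℝ) / (b : ℝ) ^ l + n) := by
  have hbl : 0 < b ^ l := pow_pos hb l
  have hIco (m : ℕ) : (m : ℝ) / (b : ℝ) ^ l ∈ Ico (n : ℝ) (n + 1) ↔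
      n * b ^ l ≤ m ∧ m < n * b ^ l + b ^ l := by
    rw [← Nat.cast_pow, Nat.cast_div_mem_Ico_iff hbl]
  let e : {r // PaddedAdmissible b A l (n * b ^ l + r) ∧ r < b ^ l} ≃
      {m // PaddedAdmissible b A l m ∧ (m : ℝ) / (b : ℝ) ^ l ∈ Ico (n : ℝ) (n + 1)} :=
    { toFun := fun r => ⟨n * b ^ l + r, r.2.1, (hIco _).2 (by omega)⟩
      invFun := fun m => ⟨m.1 - n * b ^ l, by
        have hm := (hIco _).1 m.2.2
        exact ⟨by rw [Nat.add_sub_cancel' hm.1]; exact m.2.1, by omega⟩⟩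
      left_inv := fun r => by ext; simp
      right_inv := fun m => by ext; simp [Nat.add_sub_cancel' ((hIco _).1 m.2.2).1] }
  rw [levelMeasure, Measure.restrict_sum_dirac_subtype _ (fun m : ℕ => (m : ℝ) / (b : ℝ) ^ l)
    measurableSet_Ico, ← Measure.sum_comp_equiv e]
  refine congrArg Measure.sum (funext fun r => congrArg Measure.dirac ?_)
  simp only [e, Equiv.coe_fn_mk]
  push_cast
  field_simp
  ring

lemma levelMeasure_restrict_Ico_of_not_admissible (hb : 1 < b) {n : ℕ} (hn : 0 < n)
    (hA : ¬ Admissible b A n) (l : ℕ) :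
    (levelMeasure b A l).restrict (Ico (n : ℝ) (n + 1)) = 0 := by
  rw [levelMeasure_restrict_Ico (by omega)]
  have : IsEmpty {r // PaddedAdmissible b A l (n * b ^ l + r) ∧ r < b ^ l} :=
    ⟨fun r => hA ((paddedAdmissible_mul_pow_add_iff hb hn r.2.2).1 r.2.1).1⟩
  exact Measure.sum_of_isEmpty _

lemma levelMeasure_restrict_Ico_of_admissible (hb : 1 < b) {n : ℕ} (hn : 0 < n)
    (hA : Admissible b A n) (l : ℕ) :
    (levelMeasure b A l).restrict (Ico (n : ℝ) (n + 1)) =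
      ((levelMeasure b A l).restrict (Ico 0 1)).map (· + (n : ℝ)) := by
  have hunit := levelMeasure_restrict_Ico (A := A) (by omega : 0 < b) l 0
  simp only [Nat.cast_zero, zero_add, add_zero] at hunit
  rw [levelMeasure_restrict_Ico (by omega), hunit, Measure.map_sum_dirac (measurable_add_const _)]
  exact Measure.sum_subtype_congr (fun r : ℕ => Measure.dirac ((r : ℝ) / (b : ℝ) ^ l + n))
    fun r => and_congr_left fun hr => by
      rw [paddedAdmissible_mul_pow_add_iff hb hn hr, zero_mul, zero_add, and_iff_right hA]

end LevelMeasure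

theorem kempner_measure_restrict_general (b : ℕ) (hb : 1 < b) (A : Finset ℕ)
    (n : ℕ) (hn : 0 < n) :
    (¬ Admissible b A n →
        (kempnerMeasure b A).restrict (Set.Ico (n : ℝ) ((n : ℝ) + 1)) = 0)
    ∧ (Admissible b A n →
        (kempnerMeasure b A).restrict (Set.Ico (n : ℝ) ((n : ℝ) + 1))
          = Measure.map (fun x => x + (n : ℝ))
              ((kempnerMeasure b A).restrict (Set.Ico (0 : ℝ) 1))) := by
  rw [kempnerMeasure_eq_sum_levelMeasure, Measure.restrict_sum _ measurableSet_Ico,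
    Measure.restrict_sum _ measurableSet_Ico]
  simp only [Measure.restrict_smul]
  refine ⟨fun hA => ?_, fun hA => ?_⟩
  · simp only [levelMeasure_restrict_Ico_of_not_admissible hb hn hA, smul_zero, Measure.sum_zero]
  · rw [Measure.map_sum (measurable_add_const _).aemeasurable]
    simp only [Measure.map_smul, levelMeasure_restrict_Ico_of_admissible hb hn hA]

theorem kempner_measure_restrict (b : ℕ) (hb : 1 < b) (A : Finset ℕ)
    (hA : A ⊂ Finset.range b) (hAne : A.Nonempty) (hA0 : A ≠ {0})
    (n : ℕ) (hn : 0 < n) :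
    (¬ Admissible b A n →
        (kempnerMeasure b A).restrict (Set.Ico (n : ℝ) ((n : ℝ) + 1)) = 0)
    ∧ (Admissible b A n →
        (kempnerMeasure b A).restrict (Set.Ico (n : ℝ) ((n : ℝ) + 1))
          = Measure.map (fun x => x + (n : ℝ))
              ((kempnerMeasure b A).restrict (Set.Ico (0 : ℝ) 1))) :=
  kempner_measure_restrict_general b hb A n hn
end

section
/- For any nonzero admissible integer n, ∫_{[0,1)} 1/(n+x) dμ(x) = Σ_{m admissible, ld_{l(n)}(m) = n} 1/m, where the sum runs over all admissible integers m whose l(n) leading base-b digits form the integer n (here ld_l(m), for m with at least l digits, denotes the integer in [b^{l−1}, b^l) sharing with m its l leading base-b digits). -/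
open MeasureTheory

/-! On `[0, 1)` the measure is a sum of masses `b ^ (-l)` at the points `k / b ^ l`, one for each
block `k` of `l` digits from `A` (when `0 ∉ A`, the atom `δ_0` is the empty block), and
`b ^ (-l) / (n + k / b ^ l) = 1 / (k + b ^ l * n)`. Appending the block `k` to the digits of `n`,
`k ↦ k + b ^ l * n`, is a bijection from these blocks onto the admissible integers whose leading
digits are those of `n`. -/

open scoped ENNReal

/-- `Nat.digitsAppend b l k` is `k` written with exactly `l` base-`b` digits, leading zeros
included, when `k < b ^ l`. -/
def IsAdmissibleBlock (b : ℕ) (A : Finset ℕ) (l k : ℕ) : Prop :=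
  k < b ^ l ∧ ∀ d ∈ Nat.digitsAppend b l k, d ∈ A

instance (b : ℕ) (A : Finset ℕ) (l k : ℕ) : Decidable (IsAdmissibleBlock b A l k) := by
  unfold IsAdmissibleBlock
  infer_instance

def IsAdmissibleExtension (b : ℕ) (A : Finset ℕ) (n m : ℕ) : Prop :=
  Admissible b A m ∧ (Nat.digits b n).length ≤ (Nat.digits b m).length ∧
    m / b ^ ((Nat.digits b m).length - (Nat.digits b n).length) = n

namespace Nat

theorem digits_add_base_pow_mul {b l k n : ℕ} (hb : 1 < b) (hn : 0 < n) (hk : k < b ^ l) :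
    digits b (k + b ^ l * n) = digitsAppend b l k ++ digits b n := by
  have hlen : (digits b k).length ≤ l := (digits_length_le_iff hb k).mpr hk
  rw [digitsAppend, digits_append_zeroes_append_digits hb hn, Nat.add_sub_cancel' hlen]

theorem length_digits_add_base_pow_mul {b l k n : ℕ} (hb : 1 < b) (hn : 0 < n)
    (hk : k < b ^ l) : (digits b (k + b ^ l * n)).length = l + (digits b n).length := by
  rw [digits_add_base_pow_mul hb hn hk, List.length_append, length_digitsAppend hb l hk]

end Nat

section Digits

variable {b : ℕ} {A : Finset ℕ} {n m l k : ℕ}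

theorem IsAdmissibleBlock.isAdmissibleExtension (hb : 1 < b) (hn : 0 < n)
    (hadm : Admissible b A n) (h : IsAdmissibleBlock b A l k) :
    IsAdmissibleExtension b A n (k + b ^ l * n) := by
  have hlen := Nat.length_digits_add_base_pow_mul hb hn h.1
  have hpow : 0 < b ^ l := Nat.pow_pos (by omega)
  refine ⟨⟨?_, fun h0 => ?_⟩, by omega, ?_⟩
  · rw [Nat.digits_add_base_pow_mul hb hn h.1]
    intro d hd
    rcases List.mem_append.1 hd with hd | hd
    exacts [h.2 d hd, hadm.1 d hd]
  · have := Nat.mul_pos hpow hn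
    omega
  · rw [hlen, Nat.add_sub_cancel, Nat.add_mul_div_left _ _ hpow, Nat.div_eq_of_lt h.1, zero_add]

theorem IsAdmissibleExtension.mod_add_base_pow_mul (h : IsAdmissibleExtension b A n m) :
    m % b ^ ((Nat.digits b m).length - (Nat.digits b n).length)
      + b ^ ((Nat.digits b m).length - (Nat.digits b n).length) * n = m := by
  have := Nat.mod_add_div m (b ^ ((Nat.digits b m).length - (Nat.digits b n).length))
  rwa [h.2.2] at this

theorem IsAdmissibleExtension.isAdmissibleBlock (hb : 1 < b) (hn : 0 < n)
    (h : IsAdmissibleExtension b A n m) :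
    IsAdmissibleBlock b A ((Nat.digits b m).length - (Nat.digits b n).length)
      (m % b ^ ((Nat.digits b m).length - (Nat.digits b n).length)) := by
  have hk := Nat.mod_lt m (Nat.pow_pos (n := (Nat.digits b m).length - (Nat.digits b n).length)
    (by omega : 0 < b))
  refine ⟨hk, fun d hd => h.1.1 d ?_⟩
  rw [← h.mod_add_base_pow_mul, Nat.digits_add_base_pow_mul hb hn hk]
  exact List.mem_append_left _ hd

theorem IsAdmissibleExtension.pos (hn : 0 < n) (h : IsAdmissibleExtension b A n m) : 0 < m := by
  by_contra hm
  have := h.2.1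
  simp_all [Nat.digits_eq_nil_iff_eq_zero]

end Digits

def admissibleBlockEquiv {b : ℕ} {A : Finset ℕ} {n : ℕ} (hb : 1 < b) (hn : 0 < n)
    (hadm : Admissible b A n) :
    {p : ℕ × ℕ // IsAdmissibleBlock b A p.1 p.2} ≃ {m : ℕ // IsAdmissibleExtension b A n m} where
  toFun p := ⟨p.1.2 + b ^ p.1.1 * n, p.2.isAdmissibleExtension hb hn hadm⟩
  invFun m := ⟨((Nat.digits b m).length - (Nat.digits b n).length,
    m % b ^ ((Nat.digits b m).length - (Nat.digits b n).length)), m.2.isAdmissibleBlock hb hn⟩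
  left_inv := by
    rintro ⟨⟨l, k⟩, h⟩
    have hl : (Nat.digits b (k + b ^ l * n)).length - (Nat.digits b n).length = l := by
      rw [Nat.length_digits_add_base_pow_mul hb hn h.1, Nat.add_sub_cancel]
    ext <;> simp only [hl, Nat.add_mul_mod_self_left, Nat.mod_eq_of_lt h.1]
  right_inv m := Subtype.ext m.2.mod_add_base_pow_mul

section Measure

variable {b : ℕ} {A : Finset ℕ}

theorem isAdmissibleBlock_iff_of_zero_mem (h0 : 0 ∈ A) {l k : ℕ} :
    IsAdmissibleBlock b A l k ↔ Admissible b A k ∧ k < b ^ l := by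
  simp only [IsAdmissibleBlock, Admissible, Nat.digitsAppend, List.mem_append, List.mem_replicate,
    or_imp, and_imp, forall_and, forall_eq_apply_imp_iff, h0, implies_true, and_true]
  tauto

theorem isAdmissibleBlock_iff_of_zero_notMem (h0 : 0 ∉ A) {l k : ℕ}
    (hlk : (l, k) ≠ (0, 0)) :
    IsAdmissibleBlock b A l k ↔
      (Admissible b A k ∧ l ≤ (Nat.digits b k).length) ∧ k < b ^ l := by
  simp only [IsAdmissibleBlock, Admissible, Nat.digitsAppend, List.mem_append, List.mem_replicate,
    or_imp, forall_and]
  rcases Nat.eq_zero_or_pos k with rfl | hk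
  · have hl : l ≠ 0 := by rintro rfl; exact hlk rfl
    simp [h0, hl]
  · simp only [ne_eq, hk.ne', not_false_eq_true, Nat.sub_eq_zero_iff_le, not_le, and_imp,
      forall_eq_apply_imp_iff, h0, imp_false, not_lt, and_true]
    tauto

theorem mem_Ico_div_pow_iff (hb : 0 < b) (k l : ℕ) :
    (k : ℝ) / (b : ℝ) ^ l ∈ Set.Ico (0 : ℝ) 1 ↔ k < b ^ l := by
  rw [Set.mem_Ico, div_lt_one (by positivity)]
  exact_mod_cast and_iff_right (by positivity)

theorem setLIntegral_Ico_sum_smul_sum_dirac (hb : 0 < b) (P : ℕ → ℕ → Prop)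
    [∀ l k, Decidable (P l k)] (f : ℝ → ℝ≥0∞) :
    ∫⁻ x in Set.Ico (0 : ℝ) 1, f x ∂(Measure.sum fun l : ℕ => ((b : ℝ≥0∞) ^ l)⁻¹ •
        Measure.sum fun k : {k : ℕ // P l k} => Measure.dirac ((k : ℝ) / (b : ℝ) ^ l))
      = ∑' p : ℕ × ℕ, if P p.1 p.2 ∧ p.2 < b ^ p.1
          then ((b : ℝ≥0∞) ^ p.1)⁻¹ * f (p.2 / (b : ℝ) ^ p.1) else 0 := by
  rw [Measure.restrict_sum _ measurableSet_Ico, lintegral_sum_measure, ENNReal.tsum_prod']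
  refine tsum_congr fun l => ?_
  rw [Measure.restrict_smul, lintegral_smul_measure, Measure.restrict_sum _ measurableSet_Ico,
    lintegral_sum_measure, smul_eq_mul, ← ENNReal.tsum_mul_left]
  simp_rw [setLIntegral_dirac, mem_Ico_div_pow_iff hb]
  refine (tsum_subtype {k | P l k} fun k : ℕ => ((b : ℝ≥0∞) ^ l)⁻¹ *
    if k < b ^ l then f (k / (b : ℝ) ^ l) else 0).trans (tsum_congr fun k => ?_)
  by_cases hk : P l k <;> simp [hk]

theorem setLIntegral_Ico_kempnerMeasure (hb : 0 < b) (f : ℝ → ℝ≥0∞) :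
    ∫⁻ x in Set.Ico (0 : ℝ) 1, f x ∂(kempnerMeasure b A)
      = ∑' p : ℕ × ℕ, if IsAdmissibleBlock b A p.1 p.2
          then ((b : ℝ≥0∞) ^ p.1)⁻¹ * f (p.2 / (b : ℝ) ^ p.1) else 0 := by
  by_cases h0 : 0 ∈ A
  · rw [kempnerMeasure, if_pos h0]
    refine (setLIntegral_Ico_sum_smul_sum_dirac hb _ f).trans (tsum_congr fun p => ?_)
    simp only [isAdmissibleBlock_iff_of_zero_mem h0]
  · rw [kempnerMeasure, if_neg h0, Measure.restrict_add, lintegral_add_measure,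
      setLIntegral_dirac, if_pos (Set.left_mem_Ico.2 zero_lt_one),
      setLIntegral_Ico_sum_smul_sum_dirac hb]
    conv_rhs => rw [ENNReal.tsum_eq_add_tsum_ite (0, 0)]
    have hzero : IsAdmissibleBlock b A 0 0 := by simp [IsAdmissibleBlock, Nat.digitsAppend]
    rw [if_pos hzero, pow_zero, inv_one, one_mul, Nat.cast_zero, zero_div]
    refine congrArg _ (tsum_congr fun p => ?_)
    by_cases hp : p = (0, 0)
    · simp [hp, Admissible, h0]
    · simp only [if_neg hp, isAdmissibleBlock_iff_of_zero_notMem h0 hp]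

end Measure

theorem inv_pow_mul_ofReal_inv_add_div {b n : ℕ} (hb : 0 < b) (hn : 0 < n) (l k : ℕ) :
    ((b : ℝ≥0∞) ^ l)⁻¹ * ENNReal.ofReal (1 / ((n : ℝ) + (k : ℝ) / (b : ℝ) ^ l))
      = ((k + b ^ l * n : ℕ) : ℝ≥0∞)⁻¹ := by
  have hpow : (0 : ℝ) < (b : ℝ) ^ l := by positivity
  have hsum : (0 : ℝ) < (n : ℝ) + (k : ℝ) / (b : ℝ) ^ l := by positivity
  rw [← ENNReal.ofReal_natCast, ← ENNReal.ofReal_pow (Nat.cast_nonneg b),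
    ← ENNReal.ofReal_inv_of_pos hpow, ← ENNReal.ofReal_mul (inv_nonneg.2 hpow.le),
    ← ENNReal.ofReal_natCast, ← ENNReal.ofReal_inv_of_pos (by positivity)]
  congr 1
  push_cast
  field_simp
  ring

theorem setLIntegral_Ico_inv_add_kempnerMeasure {b : ℕ} {A : Finset ℕ} {n : ℕ} (hb : 1 < b)
    (hn : 0 < n) (hadm : Admissible b A n) :
    ∫⁻ x in Set.Ico (0 : ℝ) 1, ENNReal.ofReal (1 / ((n : ℝ) + x)) ∂(kempnerMeasure b A)
      = ∑' m : {m : ℕ // IsAdmissibleExtension b A n m}, ((m : ℕ) : ℝ≥0∞)⁻¹ := by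
  rw [setLIntegral_Ico_kempnerMeasure (by omega), ← (admissibleBlockEquiv hb hn hadm).tsum_eq]
  simp only [inv_pow_mul_ofReal_inv_add_div (b := b) (by omega) hn]
  refine (tsum_congr fun p => ?_).trans (tsum_subtype {p : ℕ × ℕ | IsAdmissibleBlock b A p.1 p.2}
    fun p => ((p.2 + b ^ p.1 * n : ℕ) : ℝ≥0∞)⁻¹).symm
  simp only [Set.indicator_apply, Set.mem_ofPred_eq]

theorem kempner_leading_digits_integral_general (b : ℕ) (hb : 1 < b) (A : Finset ℕ)
    (n : ℕ) (hn : 0 < n) (hadm : Admissible b A n) :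
    ∫ x in Set.Ico (0 : ℝ) 1, 1 / ((n : ℝ) + x) ∂(kempnerMeasure b A)
      = ∑' m : {m : ℕ // Admissible b A m ∧
            (Nat.digits b n).length ≤ (Nat.digits b m).length ∧
            m / b ^ ((Nat.digits b m).length - (Nat.digits b n).length) = n},
          (1 : ℝ) / ((m : ℕ) : ℝ) := by
  have hnonneg : 0 ≤ᵐ[(kempnerMeasure b A).restrict (Set.Ico (0 : ℝ) 1)]
      fun x => 1 / ((n : ℝ) + x) :=
    ae_restrict_of_forall_mem measurableSet_Ico fun x hx => by
      have : (0 : ℝ) < n := by exact_mod_cast hn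
      exact one_div_nonneg.2 (by linarith [hx.1])
  have hmeas : AEStronglyMeasurable (fun x : ℝ => 1 / ((n : ℝ) + x))
      ((kempnerMeasure b A).restrict (Set.Ico (0 : ℝ) 1)) :=
    ((measurable_const.add measurable_id).const_div 1).aestronglyMeasurable
  rw [integral_eq_lintegral_of_nonneg_ae hnonneg hmeas,
    setLIntegral_Ico_inv_add_kempnerMeasure hb hn hadm, ENNReal.tsum_toReal_eq
    fun m => ENNReal.inv_ne_top.2 (Nat.cast_ne_zero.2 (m.2.pos hn).ne')]
  exact tsum_congr fun m => by rw [ENNReal.toReal_inv, ENNReal.toReal_natCast, one_div]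

theorem kempner_leading_digits_integral (b : ℕ) (hb : 1 < b) (A : Finset ℕ)
    (hA : A ⊂ Finset.range b) (hAne : A.Nonempty) (hA0 : A ≠ {0})
    (n : ℕ) (hn : 0 < n) (hadm : Admissible b A n) :
    ∫ x in Set.Ico (0 : ℝ) 1, 1 / ((n : ℝ) + x) ∂(kempnerMeasure b A)
      = ∑' m : {m : ℕ // Admissible b A m ∧
            (Nat.digits b n).length ≤ (Nat.digits b m).length ∧
            m / b ^ ((Nat.digits b m).length - (Nat.digits b n).length) = n},
          (1 : ℝ) / ((m : ℕ) : ℝ) :=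
  kempner_leading_digits_integral_general b hb A n hn hadm
end

section
/- For every l ≥ 1 the Kempner sum satisfies K = Σ_{n admissible, 0<n<b^{l−1}} 1/n + Σ_{n admissible, l(n)=l} ∫_{[0,1)} 1/(n+x) dμ(x). -/
open MeasureTheory

/-!
Every admissible `m` with at least `l` digits splits uniquely as `m = n * b ^ L + r`, where `n`,
its leading `l` digits, is admissible of length `l`, and `r`, its trailing `L` digits read with
leading zeros, is a block of digits from `A`. Restricted to `[0, 1)`, `μ` is
`∑ L, b⁻ᴸ ∑ r, δ (r / bᴸ)` over such blocks (in the case `0 ∉ A` the atom `δ 0` supplies the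
empty block), so `∫_{[0,1)} 1 / (n + x) dμ = ∑ L, ∑ r, 1 / (n * b ^ L + r)`. Summing over `n` and
adding the admissible numbers with fewer than `l` digits gives `K`. The computation is done in
`[0, ∞]`; `K` is finite because there are at most `N ^ k` admissible numbers with `k` digits,
each at least `b ^ (k - 1)`, and `N < b`.
-/

open MeasureTheory Set
open scoped ENNReal

namespace Kempner

variable {b : ℕ} {A : Finset ℕ}

-- `Nat.digits` puts the least significant digit first, so the appended zeros are leading zeros.
def paddedDigits (b L r : ℕ) : List ℕ :=
  Nat.digits b r ++ List.replicate (L - (Nat.digits b r).length) 0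

def IsAdmissibleBlock (b : ℕ) (A : Finset ℕ) (L r : ℕ) : Prop :=
  r < b ^ L ∧ ∀ d ∈ paddedDigits b L r, d ∈ A

def admissibleOfLength (b : ℕ) (A : Finset ℕ) (l : ℕ) : Finset ℕ :=
  (Finset.range (b ^ l)).filter fun n => Admissible b A n ∧ (Nat.digits b n).length = l

def admissibleOfLengthGE (b : ℕ) (A : Finset ℕ) (l : ℕ) : Set ℕ :=
  {m | (∀ d ∈ Nat.digits b m, d ∈ A) ∧ l ≤ (Nat.digits b m).length}

theorem admissible_iff_of_ne_zero {n : ℕ} (hn : n ≠ 0) :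
    Admissible b A n ↔ ∀ d ∈ Nat.digits b n, d ∈ A := by
  simp [Admissible, hn]

theorem length_paddedDigits (hb : 1 < b) {L r : ℕ} (hr : r < b ^ L) :
    (paddedDigits b L r).length = L := by
  have := (Nat.digits_length_le_iff hb r).2 hr
  simp only [paddedDigits, List.length_append, List.length_replicate]
  omega

theorem digits_mul_pow_add (hb : 1 < b) {n L r : ℕ} (hn : n ≠ 0) (hr : r < b ^ L) :
    Nat.digits b (n * b ^ L + r) = paddedDigits b L r ++ Nat.digits b n := by
  have hlen : (Nat.digits b r).length ≤ L := (Nat.digits_length_le_iff hb r).2 hr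
  rw [paddedDigits, Nat.digits_append_zeroes_append_digits hb (Nat.pos_of_ne_zero hn),
    Nat.add_sub_cancel' hlen, add_comm, mul_comm]

theorem length_digits_mul_pow_add (hb : 1 < b) {n L r : ℕ} (hn : n ≠ 0) (hr : r < b ^ L) :
    (Nat.digits b (n * b ^ L + r)).length = L + (Nat.digits b n).length := by
  rw [digits_mul_pow_add hb hn hr, List.length_append, length_paddedDigits hb hr]

theorem isAdmissibleBlock_iff {L r : ℕ} :
    IsAdmissibleBlock b A L r ↔
      r < b ^ L ∧ (∀ d ∈ Nat.digits b r, d ∈ A) ∧ (0 ∈ A ∨ L ≤ (Nat.digits b r).length) := by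
  unfold IsAdmissibleBlock paddedDigits
  refine and_congr_right fun hr => ?_
  simp only [List.forall_mem_append, List.mem_replicate]
  grind

theorem setOf_isAdmissibleBlock_zero : {r | IsAdmissibleBlock b A 0 r} = {0} := by
  ext r
  refine ⟨fun h => Nat.lt_one_iff.1 (pow_zero b ▸ h.1), ?_⟩
  rintro rfl
  simp [IsAdmissibleBlock, paddedDigits]

theorem setOf_admissible_inter_Iio (h0 : 0 ∈ A) (L : ℕ) :
    {r | Admissible b A r} ∩ Iio (b ^ L) = {r | IsAdmissibleBlock b A L r} := by
  ext r
  simp only [mem_inter_iff, mem_ofPred_eq, mem_Iio, isAdmissibleBlock_iff, Admissible]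
  tauto

theorem setOf_admissible_le_length_inter_Iio (h0 : 0 ∉ A) {L : ℕ} (hL : L ≠ 0) :
    {r | Admissible b A r ∧ L ≤ (Nat.digits b r).length} ∩ Iio (b ^ L) =
      {r | IsAdmissibleBlock b A L r} := by
  ext r
  simp only [mem_inter_iff, mem_ofPred_eq, mem_Iio, isAdmissibleBlock_iff, h0, false_or]
  constructor
  · rintro ⟨⟨⟨hd, -⟩, hL'⟩, hr⟩
    exact ⟨hr, hd, hL'⟩
  · rintro ⟨hr, hd, hL'⟩
    refine ⟨⟨⟨hd, fun hr0 => ?_⟩, hL'⟩, hr⟩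
    simp [hr0] at hL'
    omega

theorem setLIntegral_Ico_sum_dirac (hb : 0 < b) (p : ℕ → Prop) (L : ℕ) (f : ℝ → ℝ≥0∞) :
    ∫⁻ x in Ico 0 1, f x
        ∂(Measure.sum fun r : {r // p r} => Measure.dirac ((r : ℝ) / (b : ℝ) ^ L)) =
      ∑' r : ↥({r | p r} ∩ Iio (b ^ L)), f ((r : ℝ) / (b : ℝ) ^ L) := by
  classical
  have hmem (r : ℕ) : (r : ℝ) / (b : ℝ) ^ L ∈ Ico (0 : ℝ) 1 ↔ r ∈ Iio (b ^ L) := by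
    rw [mem_Ico, div_lt_one (by positivity), mem_Iio]
    exact_mod_cast and_iff_right (by positivity)
  rw [Measure.restrict_sum _ measurableSet_Ico, lintegral_sum_measure]
  refine (tsum_subtype {r | p r}
    fun r : ℕ => ∫⁻ x in Ico 0 1, f x ∂Measure.dirac ((r : ℝ) / (b : ℝ) ^ L)).trans ?_
  rw [tsum_subtype _ fun r : ℕ => f ((r : ℝ) / (b : ℝ) ^ L), ← indicator_indicator]
  congr 1 with r
  simp only [indicator, setLIntegral_dirac, hmem]

theorem setLIntegral_Ico_kempnerMeasure (hb : 1 < b) (f : ℝ → ℝ≥0∞) :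
    ∫⁻ x in Ico 0 1, f x ∂kempnerMeasure b A =
      ∑' L : ℕ, ((b : ℝ≥0∞) ^ L)⁻¹ *
        ∑' r : {r // IsAdmissibleBlock b A L r}, f ((r : ℝ) / (b : ℝ) ^ L) := by
  have hb0 : 0 < b := by omega
  rw [kempnerMeasure]
  split_ifs with h0
  · rw [Measure.restrict_sum _ measurableSet_Ico, lintegral_sum_measure]
    refine tsum_congr fun L => ?_
    rw [Measure.restrict_smul, lintegral_smul_measure, smul_eq_mul,
      setLIntegral_Ico_sum_dirac hb0, setOf_admissible_inter_Iio h0]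
    rfl
  · have hL0 : {r | Admissible b A r ∧ 0 ≤ (Nat.digits b r).length} ∩ Iio (b ^ 0) = ∅ := by
      refine eq_empty_iff_forall_notMem.2 fun r ⟨⟨hr, _⟩, hlt⟩ => h0 (hr.2 ?_)
      simpa using hlt
    rw [Measure.restrict_add, lintegral_add_measure, setLIntegral_dirac, if_pos (by simp),
      Measure.restrict_sum _ measurableSet_Ico, lintegral_sum_measure]
    simp_rw [Measure.restrict_smul, lintegral_smul_measure, smul_eq_mul,
      setLIntegral_Ico_sum_dirac hb0]
    rw [tsum_eq_zero_add' ENNReal.summable, hL0, ← add_assoc]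
    conv_rhs => rw [tsum_eq_zero_add' ENNReal.summable]
    congr 1
    · have h := tsum_singleton (0 : ℕ) fun r : ℕ => f r
      rw [← setOf_isAdmissibleBlock_zero (b := b) (A := A)] at h
      simp only [pow_zero, inv_one, one_mul, div_one, tsum_empty, add_zero, Nat.cast_zero] at h ⊢
      exact h.symm
    · refine tsum_congr fun L => ?_
      rw [setOf_admissible_le_length_inter_Iio h0 L.succ_ne_zero]
      rfl

theorem inv_pow_mul_ofReal_one_div_add_div (hb : 0 < b) {n : ℕ} (hn : 0 < n) (L r : ℕ) :
    ((b : ℝ≥0∞) ^ L)⁻¹ * ENNReal.ofReal (1 / (n + r / (b : ℝ) ^ L)) =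
      ((n * b ^ L + r : ℕ) : ℝ≥0∞)⁻¹ := by
  have hbL : (0 : ℝ) < (b : ℝ) ^ L := by positivity
  have hm : (0 : ℝ) < ((n * b ^ L + r : ℕ) : ℝ) := by positivity
  have h : ((b : ℝ) ^ L)⁻¹ * (1 / (n + r / (b : ℝ) ^ L)) = ((n * b ^ L + r : ℕ) : ℝ)⁻¹ := by
    push_cast
    field_simp
  have hbL' : ((b : ℝ≥0∞) ^ L)⁻¹ = ENNReal.ofReal ((b : ℝ) ^ L)⁻¹ := by
    rw [ENNReal.ofReal_inv_of_pos hbL, ENNReal.ofReal_pow (by positivity), ENNReal.ofReal_natCast]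
  rw [hbL', ← ENNReal.ofReal_mul (by positivity), h, ENNReal.ofReal_inv_of_pos hm,
    ENNReal.ofReal_natCast]

theorem setLIntegral_Ico_one_div_add (hb : 1 < b) {n : ℕ} (hn : 0 < n) :
    ∫⁻ x in Ico 0 1, ENNReal.ofReal (1 / (n + x)) ∂kempnerMeasure b A =
      ∑' L, ∑' r : {r // IsAdmissibleBlock b A L r}, ((n * b ^ L + r : ℕ) : ℝ≥0∞)⁻¹ := by
  simp_rw [setLIntegral_Ico_kempnerMeasure hb, ← ENNReal.tsum_mul_left,
    inv_pow_mul_ofReal_one_div_add_div (by omega : 0 < b) hn]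

theorem ne_zero_of_digits_length_ne_zero {n : ℕ} (h : (Nat.digits b n).length ≠ 0) : n ≠ 0 :=
  Nat.digits_ne_nil_iff_ne_zero.1 (List.ne_nil_of_length_pos (Nat.pos_of_ne_zero h))

theorem mem_admissibleOfLength (hb : 1 < b) {l n : ℕ} (hl : l ≠ 0) :
    n ∈ admissibleOfLength b A l ↔
      (∀ d ∈ Nat.digits b n, d ∈ A) ∧ (Nat.digits b n).length = l := by
  simp only [admissibleOfLength, Finset.mem_filter, Finset.mem_range]
  constructor
  · rintro ⟨-, hn, hlen⟩
    exact ⟨hn.1, hlen⟩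
  · rintro ⟨hd, hlen⟩
    exact ⟨(Nat.digits_length_le_iff hb n).1 hlen.le,
      (admissible_iff_of_ne_zero (ne_zero_of_digits_length_ne_zero (hlen ▸ hl))).2 hd, hlen⟩

theorem ne_zero_of_mem_admissibleOfLength (hb : 1 < b) {l n : ℕ} (hl : l ≠ 0)
    (hn : n ∈ admissibleOfLength b A l) : n ≠ 0 :=
  ne_zero_of_digits_length_ne_zero (((mem_admissibleOfLength hb hl).1 hn).2 ▸ hl)

abbrev HeadBlock (b : ℕ) (A : Finset ℕ) (l : ℕ) : Type :=
  admissibleOfLength b A l × Σ L, {r // IsAdmissibleBlock b A L r}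

def HeadBlock.toNat {l : ℕ} (x : HeadBlock b A l) : ℕ :=
  x.1 * b ^ x.2.1 + x.2.2

theorem HeadBlock.toNat_mem (hb : 1 < b) {l : ℕ} (hl : l ≠ 0) (x : HeadBlock b A l) :
    x.toNat ∈ admissibleOfLengthGE b A l := by
  obtain ⟨⟨n, hn⟩, L, r, hr⟩ := x
  obtain ⟨hnA, hlen⟩ := (mem_admissibleOfLength hb hl).1 hn
  have hn0 := ne_zero_of_mem_admissibleOfLength hb hl hn
  refine ⟨?_, ?_⟩
  · rw [toNat, digits_mul_pow_add hb hn0 hr.1, List.forall_mem_append]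
    exact ⟨hr.2, hnA⟩
  · rw [toNat, length_digits_mul_pow_add hb hn0 hr.1]
    omega

theorem HeadBlock.toNat_injective (hb : 1 < b) {l : ℕ} (hl : l ≠ 0) :
    Function.Injective (HeadBlock.toNat : HeadBlock b A l → ℕ) := by
  rintro ⟨⟨n, hn⟩, L, r, hr⟩ ⟨⟨n', hn'⟩, L', r', hr'⟩ h
  obtain ⟨-, hlen⟩ := (mem_admissibleOfLength hb hl).1 hn
  obtain ⟨-, hlen'⟩ := (mem_admissibleOfLength hb hl).1 hn'
  have hn0 := ne_zero_of_mem_admissibleOfLength hb hl hn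
  have hn0' := ne_zero_of_mem_admissibleOfLength hb hl hn'
  simp only [toNat] at h
  obtain rfl : L = L' := by
    have := congrArg (fun m => (Nat.digits b m).length) h
    simp only [length_digits_mul_pow_add hb hn0 hr.1, length_digits_mul_pow_add hb hn0' hr'.1,
      hlen, hlen'] at this
    omega
  have hdivmod {n r : ℕ} (hr : r < b ^ L) :
      (n * b ^ L + r) / b ^ L = n ∧ (n * b ^ L + r) % b ^ L = r :=
    (Nat.div_mod_unique (by positivity)).2 ⟨by ring, hr⟩
  have h₁ := hdivmod (n := n) hr.1
  have h₂ := hdivmod (n := n') hr'.1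
  rw [h] at h₁
  obtain ⟨rfl, rfl⟩ : n = n' ∧ r = r' := ⟨h₁.1.symm.trans h₂.1, h₁.2.symm.trans h₂.2⟩
  rfl

theorem HeadBlock.exists_toNat_eq (hb : 1 < b) {l : ℕ} (hl : l ≠ 0) {m : ℕ}
    (hm : m ∈ admissibleOfLengthGE b A l) :
    ∃ x : HeadBlock b A l, x.toNat = m := by
  obtain ⟨hmA, hlm⟩ := hm
  set L := (Nat.digits b m).length - l
  have hbL : b ^ L ≤ m := (Nat.lt_digits_length_iff hb m).1 (by omega)
  have hr : m % b ^ L < b ^ L := Nat.mod_lt _ (by positivity)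
  have hn0 : m / b ^ L ≠ 0 := (Nat.div_pos hbL (by positivity)).ne'
  have hm : m / b ^ L * b ^ L + m % b ^ L = m := Nat.div_add_mod' m (b ^ L)
  have hdigits := digits_mul_pow_add hb hn0 hr
  have hlen := length_digits_mul_pow_add hb hn0 hr
  rw [hm] at hdigits hlen
  rw [hdigits, List.forall_mem_append] at hmA
  exact ⟨⟨⟨m / b ^ L, (mem_admissibleOfLength hb hl).2 ⟨hmA.2, by omega⟩⟩,
    L, m % b ^ L, hr, hmA.1⟩, hm⟩

theorem tsum_inv_admissibleOfLengthGE (hb : 1 < b) {l : ℕ} (hl : l ≠ 0) :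
    ∑' m : admissibleOfLengthGE b A l, ((m : ℕ) : ℝ≥0∞)⁻¹ =
      ∑ n ∈ admissibleOfLength b A l,
        ∑' L, ∑' r : {r // IsAdmissibleBlock b A L r}, ((n * b ^ L + r : ℕ) : ℝ≥0∞)⁻¹ := by
  let e : HeadBlock b A l ≃ admissibleOfLengthGE b A l :=
    Equiv.ofBijective (codRestrict HeadBlock.toNat _ (HeadBlock.toNat_mem hb hl))
      ⟨(injective_codRestrict _).2 (HeadBlock.toNat_injective hb hl),
        fun m => (HeadBlock.exists_toNat_eq hb hl m.2).imp fun _ hx => Subtype.ext hx⟩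
  rw [← e.tsum_eq, ENNReal.tsum_prod', ← Finset.tsum_subtype]
  congr with n
  rw [ENNReal.tsum_sigma']
  rfl

theorem card_le_pow_of_forall_digits {k : ℕ} {s : Finset ℕ}
    (hs : ∀ m ∈ s, (Nat.digits b m).length = k ∧ ∀ d ∈ Nat.digits b m, d ∈ A) :
    s.card ≤ A.card ^ k := by
  classical
  calc s.card
      ≤ ((Fintype.piFinset fun _ : Fin k => A).image
          fun v => Nat.ofDigits b (List.ofFn v)).card := by
        refine Finset.card_le_card fun m hm => ?_
        obtain ⟨rfl, hmA⟩ := hs m hm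
        refine Finset.mem_image.2 ⟨fun i => (Nat.digits b m)[i],
          Fintype.mem_piFinset.2 fun i => hmA _ (List.getElem_mem _), ?_⟩
        simp [List.ofFn_getElem, Nat.ofDigits_digits]
    _ ≤ (Fintype.piFinset fun _ : Fin k => A).card := Finset.card_image_le
    _ = A.card ^ k := by simp

theorem sum_inv_admissibleOfLength_succ_le (hb : 1 < b) (k : ℕ) :
    ∑ m ∈ admissibleOfLength b A (k + 1), (m : ℝ≥0∞)⁻¹ ≤
      A.card * ((A.card : ℝ≥0∞) * (b : ℝ≥0∞)⁻¹) ^ k := by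
  have hmem {m : ℕ} (hm : m ∈ admissibleOfLength b A (k + 1)) :=
    (mem_admissibleOfLength hb k.succ_ne_zero).1 hm
  have hinv (m : ℕ) (hm : m ∈ admissibleOfLength b A (k + 1)) :
      (m : ℝ≥0∞)⁻¹ ≤ ((b : ℝ≥0∞) ^ k)⁻¹ := by
    have : b ^ k ≤ m := (Nat.lt_digits_length_iff hb m).1 (by have := (hmem hm).2; omega)
    exact ENNReal.inv_le_inv.2 (by exact_mod_cast this)
  calc ∑ m ∈ admissibleOfLength b A (k + 1), (m : ℝ≥0∞)⁻¹
      ≤ (admissibleOfLength b A (k + 1)).card • ((b : ℝ≥0∞) ^ k)⁻¹ :=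
        Finset.sum_le_card_nsmul _ _ _ hinv
    _ ≤ (A.card : ℝ≥0∞) ^ (k + 1) * ((b : ℝ≥0∞) ^ k)⁻¹ := by
        rw [nsmul_eq_mul]
        gcongr
        exact_mod_cast card_le_pow_of_forall_digits fun m hm => (hmem hm).symm
    _ = A.card * ((A.card : ℝ≥0∞) * (b : ℝ≥0∞)⁻¹) ^ k := by
        rw [ENNReal.inv_pow, mul_pow]
        ring

theorem tsum_inv_admissible_ne_top (hb : 1 < b) (hA : A.card < b) :
    ∑' m : {m // 0 < m ∧ Admissible b A m}, ((m : ℕ) : ℝ≥0∞)⁻¹ ≠ ∞ := by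
  have hsub : {m | 0 < m ∧ Admissible b A m} ⊆ ⋃ k, (admissibleOfLength b A (k + 1) : Set ℕ) := by
    rintro m ⟨hm, hmA⟩
    have hlen : (Nat.digits b m).length ≠ 0 := fun h =>
      hm.ne' (Nat.digits_eq_nil_iff_eq_zero.1 (List.length_eq_zero_iff.1 h))
    refine mem_iUnion.2 ⟨(Nat.digits b m).length - 1, ?_⟩
    rw [Finset.mem_coe, mem_admissibleOfLength hb (Nat.succ_ne_zero _)]
    exact ⟨(admissible_iff_of_ne_zero hm.ne').1 hmA, by omega⟩
  have hratio : (A.card : ℝ≥0∞) * (b : ℝ≥0∞)⁻¹ < 1 := by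
    rw [← div_eq_mul_inv, ENNReal.div_lt_iff (by simp; omega) (by simp), one_mul]
    exact_mod_cast hA
  refine (lt_of_le_of_lt ?_ (ENNReal.mul_lt_top (ENNReal.natCast_lt_top A.card)
    (tsum_geometric_lt_top.2 hratio))).ne
  calc ∑' m : {m // 0 < m ∧ Admissible b A m}, ((m : ℕ) : ℝ≥0∞)⁻¹
      ≤ ∑' m : ↥(⋃ k, (admissibleOfLength b A (k + 1) : Set ℕ)), ((m : ℕ) : ℝ≥0∞)⁻¹ :=
        ENNReal.tsum_mono_subtype (fun m : ℕ => (m : ℝ≥0∞)⁻¹) hsub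
    _ ≤ ∑' k, ∑' m : ↥(admissibleOfLength b A (k + 1) : Set ℕ), ((m : ℕ) : ℝ≥0∞)⁻¹ :=
        ENNReal.tsum_iUnion_le_tsum (fun m : ℕ => (m : ℝ≥0∞)⁻¹) _
    _ ≤ ∑' k : ℕ, A.card * ((A.card : ℝ≥0∞) * (b : ℝ≥0∞)⁻¹) ^ k := by
        refine ENNReal.tsum_le_tsum fun k => ?_
        rw [Finset.tsum_subtype' _ fun m : ℕ => (m : ℝ≥0∞)⁻¹]
        exact sum_inv_admissibleOfLength_succ_le hb k
    _ = A.card * ∑' k : ℕ, ((A.card : ℝ≥0∞) * (b : ℝ≥0∞)⁻¹) ^ k := ENNReal.tsum_mul_left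

theorem setOf_pos_admissible_eq_union (hb : 1 < b) {l : ℕ} (hl : 1 ≤ l) :
    {m | 0 < m ∧ Admissible b A m} =
      ↑((Finset.range (b ^ (l - 1))).filter fun n => 0 < n ∧ Admissible b A n) ∪
        admissibleOfLengthGE b A l := by
  ext m
  simp only [mem_union, Finset.coe_filter, mem_ofPred_eq, Finset.mem_range,
    ← Nat.digits_length_le_iff hb]
  constructor
  · rintro ⟨hm, hmA⟩
    by_cases h : (Nat.digits b m).length ≤ l - 1
    · exact Or.inl ⟨h, hm, hmA⟩
    · exact Or.inr ⟨(admissible_iff_of_ne_zero hm.ne').1 hmA, by omega⟩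
  · rintro (⟨-, h⟩ | ⟨hmA, hlen⟩)
    · exact h
    · have hm0 := ne_zero_of_digits_length_ne_zero (b := b) (n := m) (by omega)
      exact ⟨Nat.pos_of_ne_zero hm0, (admissible_iff_of_ne_zero hm0).2 hmA⟩

theorem tsum_inv_admissible_eq (hb : 1 < b) {l : ℕ} (hl : 1 ≤ l) :
    ∑' m : {m // 0 < m ∧ Admissible b A m}, ((m : ℕ) : ℝ≥0∞)⁻¹ =
      ∑ m ∈ (Finset.range (b ^ (l - 1))).filter (fun n => 0 < n ∧ Admissible b A n),
          (m : ℝ≥0∞)⁻¹ +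
        ∑ n ∈ admissibleOfLength b A l,
          ∫⁻ x in Ico 0 1, ENNReal.ofReal (1 / (n + x)) ∂kempnerMeasure b A := by
  have hl0 : l ≠ 0 := by omega
  have hdisj : Disjoint
      (↑((Finset.range (b ^ (l - 1))).filter fun n => 0 < n ∧ Admissible b A n) : Set ℕ)
      (admissibleOfLengthGE b A l) := by
    refine Set.disjoint_left.2 fun m hm ⟨_, hlen⟩ => ?_
    have := (Nat.digits_length_le_iff hb m).2 (Finset.mem_range.1 (Finset.mem_filter.1 hm).1)
    omega
  change ∑' m : ↥{m | 0 < m ∧ Admissible b A m}, ((m : ℕ) : ℝ≥0∞)⁻¹ = _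
  rw [setOf_pos_admissible_eq_union hb hl,
    Summable.tsum_union_disjoint (f := fun m : ℕ => (m : ℝ≥0∞)⁻¹) hdisj ENNReal.summable
      ENNReal.summable,
    Finset.tsum_subtype' _ fun m : ℕ => (m : ℝ≥0∞)⁻¹, tsum_inv_admissibleOfLengthGE hb hl0]
  congr 1
  refine Finset.sum_congr rfl fun n hn => (setLIntegral_Ico_one_div_add hb ?_).symm
  exact Nat.pos_of_ne_zero (ne_zero_of_mem_admissibleOfLength hb hl0 hn)

theorem kempnerSum_eq_toReal_tsum :
    kempnerSum b A = (∑' m : {m // 0 < m ∧ Admissible b A m}, ((m : ℕ) : ℝ≥0∞)⁻¹).toReal := by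
  rw [ENNReal.tsum_toReal_eq fun m => ENNReal.inv_ne_top.2 (Nat.cast_ne_zero.2 m.2.1.ne')]
  simp [kempnerSum]

theorem setIntegral_Ico_one_div_add (μ : Measure ℝ) {a : ℝ} (ha : 0 ≤ a) :
    ∫ x in Ico 0 1, 1 / (a + x) ∂μ = (∫⁻ x in Ico 0 1, ENNReal.ofReal (1 / (a + x)) ∂μ).toReal := by
  refine integral_eq_lintegral_of_nonneg_ae ?_ (Measurable.aestronglyMeasurable (by fun_prop))
  exact (ae_restrict_iff' measurableSet_Ico).2 (Filter.Eventually.of_forall fun x hx => by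
    have := hx.1
    positivity)

end Kempner

theorem kempner_sum_level_integral_general (b : ℕ) (hb : 1 < b) (A : Finset ℕ)
    (hA : A ⊂ Finset.range b)
    (l : ℕ) (hl : 1 ≤ l) :
    kempnerSum b A
      = ∑ n ∈ (Finset.range (b ^ (l - 1))).filter (fun n => 0 < n ∧ Admissible b A n),
          (1 : ℝ) / (n : ℝ)
        + ∑ n ∈ (Finset.range (b ^ l)).filter
              (fun n => Admissible b A n ∧ (Nat.digits b n).length = l),
            ∫ x in Set.Ico (0 : ℝ) 1, 1 / ((n : ℝ) + x) ∂(kempnerMeasure b A) := by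
  have hsplit := Kempner.tsum_inv_admissible_eq (A := A) hb hl
  have hfin := Kempner.tsum_inv_admissible_ne_top hb (by simpa using Finset.card_lt_card hA)
  rw [hsplit, ENNReal.add_ne_top] at hfin
  rw [Kempner.kempnerSum_eq_toReal_tsum, hsplit, ENNReal.toReal_add hfin.1 hfin.2,
    ENNReal.toReal_sum (ENNReal.sum_ne_top.1 hfin.1),
    ENNReal.toReal_sum (ENNReal.sum_ne_top.1 hfin.2)]
  congr 1 <;> refine Finset.sum_congr rfl fun n _ => ?_
  · simp
  · exact (Kempner.setIntegral_Ico_one_div_add _ n.cast_nonneg).symm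

theorem kempner_sum_level_integral (b : ℕ) (hb : 1 < b) (A : Finset ℕ)
    (hA : A ⊂ Finset.range b) (hAne : A.Nonempty) (hA0 : A ≠ {0})
    (l : ℕ) (hl : 1 ≤ l) :
    kempnerSum b A
      = ∑ n ∈ (Finset.range (b ^ (l - 1))).filter (fun n => 0 < n ∧ Admissible b A n),
          (1 : ℝ) / (n : ℝ)
        + ∑ n ∈ (Finset.range (b ^ l)).filter
              (fun n => Admissible b A n ∧ (Nat.digits b n).length = l),
            ∫ x in Set.Ico (0 : ℝ) 1, 1 / ((n : ℝ) + x) ∂(kempnerMeasure b A) :=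
  kempner_sum_level_integral_general b hb A hA l hl
end

section
/- The exponential generating function E(t) = ∫_{[0,1)} e^{tx} dμ(x) satisfies, for every real t, the functional equation E(bt) = 1 + (1/b)(Σ_{a∈A} e^{at}) E(t). -/
open MeasureTheory

/-!
On `[0, 1)` the measure `μ` is `∑ₗ b⁻ˡ ∑ₙ δ_{n / bˡ}`, the inner sum running over the `n < bˡ`
whose `l`-digit expansion, leading zeros included, uses only digits from `A`; when `0 ∉ A` the atom
`δ₀` takes the place of the then empty level `l = 0`. There are `Nˡ` such `n`, so this mass is
`∑ₗ (N / b)ˡ < ∞` and `E(c) = ∑ₗ b⁻ˡ ∑ₙ exp (c n / bˡ)`. Splitting off the leading digit `a` of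
an `(l + 1)`-digit expansion shows that the `(l + 1)`-st term of `E(b t)` is
`b⁻¹ (∑_{a ∈ A} exp (a t))` times the `l`-th term of `E(t)`, while the `0`-th term is `1`.
-/

namespace MeasureTheory.Measure

lemma sum_eq_zero_add {α : Type*} [MeasurableSpace α] (μ : ℕ → Measure α) :
    sum μ = μ 0 + sum fun n : ℕ => μ (n + 1) := by
  ext s hs
  rw [add_apply, sum_apply _ hs, sum_apply _ hs, tsum_eq_zero_add' ENNReal.summable]

lemma restrict_sum_dirac {ι α : Type*} [Countable ι] [MeasurableSpace α]
    {p : ι → Prop} {s : Set α} (hs : MeasurableSet s) (x : ι → α) (F : Finset ι)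
    (hF : ∀ i, i ∈ F ↔ p i ∧ x i ∈ s) :
    (sum fun i : {i // p i} => dirac (x i)).restrict s = ∑ i ∈ F, dirac (x i) := by
  ext t ht
  rw [restrict_apply ht, sum_apply _ (ht.inter hs), finsetSum_apply]
  simp only [dirac_apply' _ (ht.inter hs), dirac_apply' _ ht]
  change ∑' i : ({i | p i} : Set ι), _ = _
  rw [tsum_subtype {i | p i} fun i => (t ∩ s).indicator 1 (x i), tsum_eq_sum (s := F)]
  · exact Finset.sum_congr rfl fun i _ => by grind [Set.indicator]
  · exact fun i _ => by grind [Set.indicator]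

end MeasureTheory.Measure

namespace Nat

lemma digitsAppend_add_pow_mul {b : ℕ} (hb : 1 < b) {l m a : ℕ} (hm : m < b ^ l) (ha : a < b) :
    digitsAppend b (l + 1) (m + b ^ l * a) = digitsAppend b l m ++ [a] := by
  have hL : digitsAppend b l m ++ [a] ∈
      {L : List ℕ | L.length = l + 1 ∧ ∀ x ∈ L, x < b} := by
    refine ⟨by simp [length_digitsAppend hb l hm], ?_⟩
    simp only [List.mem_append, List.mem_singleton]
    rintro x (hx | rfl)
    · exact lt_of_mem_digitsAppend hb l x hx
    · exact ha
  have hval : ofDigits b (digitsAppend b l m ++ [a]) = m + b ^ l * a := by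
    rw [ofDigits_append, (setInvOn_digitsAppend_ofDigits hb l).2 hm,
      length_digitsAppend hb l hm, ofDigits_singleton]
  rw [← hval]
  exact (setInvOn_digitsAppend_ofDigits hb (l + 1)).1 hL

end Nat

namespace Kempner

open Finset

variable {b : ℕ} {A : Finset ℕ}

def paddedAdmissible (b : ℕ) (A : Finset ℕ) (l : ℕ) : Finset ℕ :=
  (range (b ^ l)).filter fun n => ∀ d ∈ Nat.digitsAppend b l n, d ∈ A

lemma mem_paddedAdmissible {l n : ℕ} :
    n ∈ paddedAdmissible b A l ↔ n < b ^ l ∧ ∀ d ∈ Nat.digitsAppend b l n, d ∈ A := by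
  simp [paddedAdmissible]

lemma paddedAdmissible_zero : paddedAdmissible b A 0 = {0} := by
  ext n
  simp +contextual [mem_paddedAdmissible, Nat.digitsAppend]

lemma mem_paddedAdmissible_succ (hb : 1 < b) (hA : A ⊆ range b) {l n : ℕ} :
    n ∈ paddedAdmissible b A (l + 1) ↔ n / b ^ l ∈ A ∧ n % b ^ l ∈ paddedAdmissible b A l := by
  have hbl : 0 < b ^ l := by positivity
  have hmod : n % b ^ l < b ^ l := Nat.mod_lt _ hbl
  by_cases hn : n < b ^ (l + 1)
  · have hdiv : n / b ^ l < b := by rwa [Nat.div_lt_iff_lt_mul hbl, ← pow_succ']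
    have hsplit := Nat.digitsAppend_add_pow_mul hb hmod hdiv
    rw [Nat.mod_add_div] at hsplit
    simp [mem_paddedAdmissible, hsplit, hn, hmod, or_imp, forall_and, and_comm]
  · have hdiv : b ≤ n / b ^ l := by
      rwa [Nat.le_div_iff_mul_le hbl, ← pow_succ', ← not_lt]
    refine iff_of_false (fun h => hn (mem_paddedAdmissible.mp h).1) fun h => ?_
    exact absurd (mem_range.mp (hA h.1)) (not_lt.mpr hdiv)

lemma sum_paddedAdmissible_succ (hb : 1 < b) (hA : A ⊆ range b) {M : Type*} [AddCommMonoid M]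
    (l : ℕ) (f : ℕ → M) :
    ∑ n ∈ paddedAdmissible b A (l + 1), f n =
      ∑ a ∈ A, ∑ m ∈ paddedAdmissible b A l, f (m + b ^ l * a) := by
  have hbl : 0 < b ^ l := by positivity
  rw [← sum_product']
  refine sum_nbij' (fun n => (n / b ^ l, n % b ^ l)) (fun p => p.2 + b ^ l * p.1)
    (fun n hn => mem_product.mpr ((mem_paddedAdmissible_succ hb hA).mp hn))
    (fun p hp => ?_) (fun n _ => Nat.mod_add_div n (b ^ l)) (fun p hp => ?_)
    (fun n _ => by rw [Nat.mod_add_div])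
  all_goals
    obtain ⟨ha, hm⟩ := mem_product.mp hp
    have hm' : p.2 < b ^ l := (mem_paddedAdmissible.mp hm).1
    have hdiv : (p.2 + b ^ l * p.1) / b ^ l = p.1 := by
      rw [Nat.add_mul_div_left _ _ hbl, Nat.div_eq_of_lt hm', zero_add]
    have hmod : (p.2 + b ^ l * p.1) % b ^ l = p.2 := by
      rw [Nat.add_mul_mod_self_left, Nat.mod_eq_of_lt hm']
  · exact (mem_paddedAdmissible_succ hb hA).mpr (by rw [hdiv, hmod]; exact ⟨ha, hm⟩)
  · simp [hdiv, hmod]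

lemma card_paddedAdmissible (hb : 1 < b) (hA : A ⊆ range b) (l : ℕ) :
    #(paddedAdmissible b A l) = #A ^ l := by
  induction l with
  | zero => simp [paddedAdmissible_zero]
  | succ l ih =>
    rw [card_eq_sum_ones, sum_paddedAdmissible_succ hb hA]
    simp [ih, pow_succ, mul_comm]

lemma forall_mem_digitsAppend_iff {l n : ℕ} :
    (∀ d ∈ Nat.digitsAppend b l n, d ∈ A) ↔
      (∀ d ∈ Nat.digits b n, d ∈ A) ∧ ((Nat.digits b n).length < l → 0 ∈ A) := by
  simp only [Nat.digitsAppend, List.mem_append, List.mem_replicate, or_imp, forall_and]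
  grind

lemma mem_paddedAdmissible_iff_of_zero_mem (h0 : 0 ∈ A) {l n : ℕ} :
    n ∈ paddedAdmissible b A l ↔ Admissible b A n ∧ n < b ^ l := by
  simp [mem_paddedAdmissible, forall_mem_digitsAppend_iff, Admissible, h0, and_comm]

lemma mem_paddedAdmissible_iff_of_zero_notMem (h0 : 0 ∉ A) {l n : ℕ} (hl : l ≠ 0) :
    n ∈ paddedAdmissible b A l ↔
      (Admissible b A n ∧ l ≤ (Nat.digits b n).length) ∧ n < b ^ l := by
  simp only [mem_paddedAdmissible, forall_mem_digitsAppend_iff, Admissible, h0, not_lt,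
    imp_false]
  grind [Nat.digits_zero]

open MeasureTheory
open scoped ENNReal

noncomputable def unitKempnerMeasure (b : ℕ) (A : Finset ℕ) : Measure ℝ :=
  Measure.sum fun l : ℕ => ((b : ℝ≥0∞) ^ l)⁻¹ •
    ∑ n ∈ paddedAdmissible b A l, Measure.dirac ((n : ℝ) / (b : ℝ) ^ l)

lemma div_pow_mem_Ico_iff (hb : 0 < b) (l n : ℕ) :
    (n : ℝ) / (b : ℝ) ^ l ∈ Set.Ico (0 : ℝ) 1 ↔ n < b ^ l := by
  have hbl : (0 : ℝ) < (b : ℝ) ^ l := by positivity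
  rw [Set.mem_Ico, div_lt_one hbl, ← Nat.cast_pow, Nat.cast_lt]
  simp [div_nonneg, hbl.le]

lemma kempnerMeasure_restrict_Ico (hb : 1 < b) :
    (kempnerMeasure b A).restrict (Set.Ico 0 1) = unitKempnerMeasure b A := by
  have hb0 : 0 < b := by omega
  have hlevel : ∀ {p : ℕ → Prop} (l : ℕ) (F : Finset ℕ),
      (∀ n, n ∈ F ↔ p n ∧ n < b ^ l) →
      (((b : ℝ≥0∞) ^ l)⁻¹ • Measure.sum fun n : {n // p n} =>
          Measure.dirac (((n : ℕ) : ℝ) / (b : ℝ) ^ l)).restrict (Set.Ico 0 1) =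
        ((b : ℝ≥0∞) ^ l)⁻¹ • ∑ n ∈ F, Measure.dirac ((n : ℝ) / (b : ℝ) ^ l) := by
    intro p l F hF
    rw [Measure.restrict_smul, Measure.restrict_sum_dirac measurableSet_Ico
      (fun n : ℕ => (n : ℝ) / (b : ℝ) ^ l) F fun n => by rw [hF, div_pow_mem_Ico_iff hb0]]
  classical
  unfold kempnerMeasure unitKempnerMeasure
  split_ifs with h0
  · rw [Measure.restrict_sum_of_countable]
    exact congrArg Measure.sum (funext fun l =>
      hlevel l _ fun n => mem_paddedAdmissible_iff_of_zero_mem h0)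
  · conv_rhs => rw [Measure.sum_eq_zero_add]
    rw [Measure.restrict_add, Measure.restrict_sum_of_countable, Measure.sum_eq_zero_add,
      hlevel 0 ∅ fun n => ?_, restrict_dirac' measurableSet_Ico, if_pos (by simp),
      paddedAdmissible_zero]
    · simp only [pow_zero, inv_one, one_smul, Nat.cast_zero, div_one, sum_empty, smul_zero,
        zero_add, sum_singleton]
      exact congrArg _ (congrArg Measure.sum (funext fun l =>
        hlevel (l + 1) _ fun n => mem_paddedAdmissible_iff_of_zero_notMem h0 l.succ_ne_zero))
    · simp only [notMem_empty, false_iff, pow_zero, Nat.lt_one_iff, not_and]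
      rintro ⟨hadm, -⟩ rfl
      exact h0 (hadm.2 rfl)

lemma unitKempnerMeasure_univ (hb : 1 < b) (hA : A ⊆ range b) :
    unitKempnerMeasure b A Set.univ = (1 - (#A : ℝ≥0∞) / b)⁻¹ := by
  simp only [unitKempnerMeasure, Measure.sum_apply _ MeasurableSet.univ, Measure.smul_apply,
    Measure.finsetSum_apply, measure_univ, sum_const, nsmul_eq_mul, mul_one, smul_eq_mul,
    card_paddedAdmissible hb hA, ← ENNReal.tsum_geometric]
  refine tsum_congr fun l => ?_
  rw [div_eq_mul_inv, mul_pow, ENNReal.inv_pow, mul_comm]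
  norm_cast

lemma isFiniteMeasure_unitKempnerMeasure (hb : 1 < b) (hA : A ⊆ range b) (hcard : #A < b) :
    IsFiniteMeasure (unitKempnerMeasure b A) := by
  refine ⟨?_⟩
  rw [unitKempnerMeasure_univ hb hA, ENNReal.inv_lt_top, tsub_pos_iff_lt]
  exact ENNReal.div_lt_of_lt_mul (by simpa using hcard)

lemma hasSum_integral_unitKempnerMeasure {E : Type*} [NormedAddCommGroup E] [NormedSpace ℝ E]
    [CompleteSpace E] {f : ℝ → E} (hf : Integrable f (unitKempnerMeasure b A)) :
    HasSum (fun l : ℕ => ((b : ℝ) ^ l)⁻¹ • ∑ n ∈ paddedAdmissible b A l, f ((n : ℝ) / (b : ℝ) ^ l))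
      (∫ x, f x ∂unitKempnerMeasure b A) := by
  refine (hasSum_integral_measure hf).congr_fun fun l => ?_
  rw [integral_smul_measure, integral_finsetSum_measure fun n _ => integrable_dirac (by simp)]
  simp [integral_dirac]

lemma hasSum_integral_Ico_kempnerMeasure (hb : 1 < b) (hA : A ⊆ range b) (hcard : #A < b)
    {E : Type*} [NormedAddCommGroup E] [NormedSpace ℝ E] [CompleteSpace E] {f : ℝ → E}
    (hf : ContinuousOn f (Set.Icc 0 1)) :
    HasSum (fun l : ℕ => ((b : ℝ) ^ l)⁻¹ • ∑ n ∈ paddedAdmissible b A l, f ((n : ℝ) / (b : ℝ) ^ l))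
      (∫ x in Set.Ico 0 1, f x ∂kempnerMeasure b A) := by
  have := isFiniteMeasure_unitKempnerMeasure hb hA hcard
  obtain ⟨C, hC⟩ := isCompact_Icc.exists_bound_of_continuousOn hf
  have hint : IntegrableOn f (Set.Ico 0 1) (kempnerMeasure b A) :=
    .of_bound (by rw [← Measure.restrict_apply_univ, kempnerMeasure_restrict_Ico hb]; simp)
      ((hf.mono Set.Ico_subset_Icc_self).aestronglyMeasurable measurableSet_Ico) C
      (ae_restrict_of_forall_mem measurableSet_Ico fun x hx => hC x (Set.Ico_subset_Icc_self hx))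
  rw [IntegrableOn, kempnerMeasure_restrict_Ico hb] at hint
  rw [kempnerMeasure_restrict_Ico hb]
  exact hasSum_integral_unitKempnerMeasure hint

lemma inv_pow_succ_mul_sum_exp (hb : 1 < b) (hA : A ⊆ range b) (t : ℝ) (l : ℕ) :
    ((b : ℝ) ^ (l + 1))⁻¹ * ∑ n ∈ paddedAdmissible b A (l + 1),
        Real.exp (b * t * ((n : ℝ) / (b : ℝ) ^ (l + 1))) =
      (b : ℝ)⁻¹ * (∑ a ∈ A, Real.exp (a * t)) *
        (((b : ℝ) ^ l)⁻¹ *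
          ∑ m ∈ paddedAdmissible b A l, Real.exp (t * ((m : ℝ) / (b : ℝ) ^ l))) := by
  have hb0 : (b : ℝ) ≠ 0 := by positivity
  rw [sum_paddedAdmissible_succ hb hA]
  simp only [mul_sum, sum_mul]
  rw [sum_comm]
  refine sum_congr rfl fun m _ => sum_congr rfl fun a _ => ?_
  have harg : b * t * (((m + b ^ l * a : ℕ) : ℝ) / (b : ℝ) ^ (l + 1)) =
      a * t + t * ((m : ℝ) / (b : ℝ) ^ l) := by
    push_cast
    field_simp
    ring
  rw [harg, Real.exp_add, pow_succ, mul_inv]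
  ring

end Kempner

theorem kempner_exp_generating_function_general (b : ℕ) (hb : 1 < b) (A : Finset ℕ)
    (hA : A ⊂ Finset.range b) (t : ℝ) :
    ∫ x in Set.Ico (0 : ℝ) 1, Real.exp ((b : ℝ) * t * x) ∂(kempnerMeasure b A)
      = 1 + (b : ℝ)⁻¹ * (∑ a ∈ A, Real.exp ((a : ℝ) * t)) *
          ∫ x in Set.Ico (0 : ℝ) 1, Real.exp (t * x) ∂(kempnerMeasure b A) := by
  have hcard : A.card < b := by simpa using Finset.card_lt_card hA
  have hE (c : ℝ) := by
    simpa only [smul_eq_mul] using Kempner.hasSum_integral_Ico_kempnerMeasure hb hA.subset hcard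
      (f := fun x => Real.exp (c * x)) (by fun_prop)
  have hshift := (hasSum_nat_add_iff' 1).mpr (hE (b * t))
  have hrec := ((hE t).mul_left ((b : ℝ)⁻¹ * ∑ a ∈ A, Real.exp (a * t))).congr_fun
    fun l => Kempner.inv_pow_succ_mul_sum_exp hb hA.subset t l
  simpa [Kempner.paddedAdmissible_zero, sub_eq_iff_eq_add'] using hshift.unique hrec

theorem kempner_exp_generating_function (b : ℕ) (hb : 1 < b) (A : Finset ℕ)
    (hA : A ⊂ Finset.range b) (hAne : A.Nonempty) (hA0 : A ≠ {0}) (t : ℝ) :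
    ∫ x in Set.Ico (0 : ℝ) 1, Real.exp ((b : ℝ) * t * x) ∂(kempnerMeasure b A)
      = 1 + (b : ℝ)⁻¹ * (∑ a ∈ A, Real.exp ((a : ℝ) * t)) *
          ∫ x in Set.Ico (0 : ℝ) 1, Real.exp (t * x) ∂(kempnerMeasure b A) :=
  kempner_exp_generating_function_general b hb A hA t
end

section
/- The sequence m ↦ ((b−1)/f)^m u_m (equivalently, m ↦ λ_{m+1}/(m+1) up to the constant factor u₀) is strictly decreasing and converges to zero. -/
open MeasureTheory

noncomputable def kempnerLambda (b : ℕ) (A : Finset ℕ) (hAne : A.Nonempty) (m : ℕ) : ℝ :=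
  (m : ℝ) * (((b : ℝ) - 1) / ((A.max' hAne : ℕ) : ℝ)) ^ (m - 1)
    * moment b A (m - 1) / moment b A 0

open Filter Topology Set
open scoped ENNReal NNReal

/-! On `[0, 1)` the measure `μ` is finite, since there are at most `(l + 1) N ^ l` admissible
`n < b ^ l` and `N < b`; and it is carried by `0` and points `n / b ^ l` whose digits are at most
`f`, so that `(b - 1) n < f b ^ l`. Hence the push-forward `ν` of `μ` restricted to `[0, 1)` under
`x ↦ (b - 1) x / f` is a finite measure on `[0, 1)` whose moments are the scaled moments. They
decrease strictly because `ν` charges the point `(b - 1) / b ∈ (0, 1)`, the image of the atom of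
`μ` at `f / b`, and tend to `0` by dominated convergence. -/

lemma ofDigits_mul_pred_add_le {b f : ℕ} (hb : 1 ≤ b) {L : List ℕ}
    (hL : ∀ d ∈ L, d ≤ f) :
    (b - 1) * Nat.ofDigits b L + f ≤ f * b ^ L.length := by
  induction L with
  | nil => simp
  | cons d L ih =>
    have hd := hL d List.mem_cons_self
    have ih := ih fun e he => hL e (List.mem_cons_of_mem d he)
    rw [Nat.ofDigits_cons, List.length_cons, pow_succ]
    obtain ⟨c, rfl⟩ : ∃ c, b = c + 1 := ⟨b - 1, by omega⟩
    simp only [Nat.add_sub_cancel] at ih ⊢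
    nlinarith

lemma ENNReal.tsum_add_one_mul_pow_ne_top {r : ℝ≥0∞} (hr : r < 1) :
    ∑' l : ℕ, ((l : ℝ≥0∞) + 1) * r ^ l ≠ ∞ := by
  lift r to ℝ≥0 using hr.ne_top
  have hr' : ‖(r : ℝ)‖ < 1 := by simpa using hr
  simp_rw [← ENNReal.coe_natCast, ← ENNReal.coe_one, ← ENNReal.coe_add, ← ENNReal.coe_pow,
    ← ENNReal.coe_mul, ENNReal.tsum_coe_ne_top_iff_summable, ← NNReal.summable_coe]
  push_cast
  simpa [add_mul] using (summable_pow_mul_geometric_of_norm_lt_one 1 hr').add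
    (summable_geometric_of_norm_lt_one hr')

lemma natCast_div_pow_mem_Ico_iff {b : ℕ} (hb : 0 < b) (n l : ℕ) :
    (n : ℝ) / (b : ℝ) ^ l ∈ Ico (0 : ℝ) 1 ↔ n < b ^ l := by
  rw [mem_Ico, div_lt_one (by positivity)]
  exact_mod_cast and_iff_right (by positivity)

lemma Finset.max'_pos_of_ne_singleton_zero {A : Finset ℕ} (hAne : A.Nonempty) (hA0 : A ≠ {0}) :
    0 < A.max' hAne :=
  Nat.pos_of_ne_zero fun h => hA0 <| Finset.eq_singleton_iff_unique_mem.2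
    ⟨h ▸ A.max'_mem hAne, fun a ha => Nat.le_zero.1 (h ▸ A.le_max' a ha)⟩

section IntegralPow

variable {ν : Measure ℝ} [IsFiniteMeasure ν]

lemma integrable_pow_of_ae_abs_le_one (h : ∀ᵐ x ∂ν, |x| ≤ 1) (m : ℕ) :
    Integrable (fun x => x ^ m) ν :=
  (integrable_const (1 : ℝ)).mono' (continuous_pow m).aestronglyMeasurable <| by
    filter_upwards [h] with x hx
    simpa [abs_pow] using pow_le_one₀ (abs_nonneg x) hx

lemma strictAnti_integral_pow (h : ∀ᵐ x ∂ν, x ∈ Ico (0 : ℝ) 1)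
    (hpos : ν (Ioo 0 1) ≠ 0) :
    StrictAnti fun m : ℕ => ∫ x, x ^ m ∂ν := by
  have habs : ∀ᵐ x ∂ν, |x| ≤ 1 := by
    filter_upwards [h] with x hx
    exact abs_le.2 ⟨by linarith [hx.1], hx.2.le⟩
  refine strictAnti_nat_of_succ_lt fun m => ?_
  rw [← sub_pos, ← integral_sub (integrable_pow_of_ae_abs_le_one habs m)
    (integrable_pow_of_ae_abs_le_one habs (m + 1))]
  refine (integral_pos_iff_support_of_nonneg_ae ?_ ((integrable_pow_of_ae_abs_le_one habs m).sub
    (integrable_pow_of_ae_abs_le_one habs (m + 1)))).2 ?_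
  · filter_upwards [h] with x hx
    simpa [pow_succ] using mul_le_of_le_one_right (pow_nonneg hx.1 m) hx.2.le
  · refine pos_iff_ne_zero.2 fun h0 => hpos (measure_mono_null (fun x hx => ?_) h0)
    simpa [sub_eq_zero] using (pow_lt_pow_right_of_lt_one₀ hx.1 hx.2 m.lt_succ_self).ne'

lemma tendsto_integral_pow_atTop (h : ∀ᵐ x ∂ν, |x| < 1) :
    Tendsto (fun m : ℕ => ∫ x, x ^ m ∂ν) atTop (𝓝 0) := by
  have hbound : ∀ m : ℕ, ∀ᵐ x ∂ν, ‖x ^ m‖ ≤ 1 := fun m => by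
    filter_upwards [h] with x hx
    simpa [abs_pow] using pow_le_one₀ (abs_nonneg x) hx.le
  have := tendsto_integral_of_dominated_convergence (fun _ => 1)
    (fun m => (continuous_pow m).aestronglyMeasurable) (integrable_const 1) hbound
    (by filter_upwards [h] with x hx using tendsto_pow_atTop_nhds_zero_of_abs_lt_one hx)
  rwa [integral_zero] at this

end IntegralPow

namespace Admissible

variable {b : ℕ} {A : Finset ℕ}

lemma card_filter_lt_pow_le (hb : 1 < b) (hA : A.Nonempty) (l : ℕ) :
    ((Finset.range (b ^ l)).filter (Admissible b A)).card ≤ (l + 1) * A.card ^ l := by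
  obtain ⟨a, ha⟩ := hA
  calc ((Finset.range (b ^ l)).filter (Admissible b A)).card
      ≤ (Finset.range (l + 1) ×ˢ Fintype.piFinset fun _ : Fin l => A).card := by
        refine Finset.card_le_card_of_injOn
          (fun n => ((Nat.digits b n).length, fun i : Fin l => (Nat.digits b n).getD i a))
          (fun n hn => ?_) (fun n hn m hm hnm => ?_)
        · obtain ⟨hn, hadm⟩ := Finset.mem_filter.1 hn
          refine Finset.mem_product.2 ⟨Finset.mem_range.2 (Nat.lt_succ_of_le
            ((Nat.digits_length_le_iff hb n).2 (Finset.mem_range.1 hn))), ?_⟩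
          refine Fintype.mem_piFinset.2 fun i => ?_
          change (Nat.digits b n).getD i a ∈ A
          rw [List.getD_eq_getElem?_getD]
          cases h : (Nat.digits b n)[(i : ℕ)]? with
          | none => exact ha
          | some d => exact hadm.1 d (List.mem_of_getElem? h)
        · obtain ⟨hlen, hget⟩ := Prod.ext_iff.1 hnm
          have hlen_le := (Nat.digits_length_le_iff hb n).2
            (Finset.mem_range.1 (Finset.mem_filter.1 hn).1)
          refine Nat.digits_inj_iff.1 (List.ext_getElem hlen fun i hi hi' => ?_)
          have hi_eq := congrFun hget ⟨i, hi.trans_le hlen_le⟩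
          dsimp only at hi_eq
          rwa [List.getD_eq_getElem _ _ hi, List.getD_eq_getElem _ _ hi'] at hi_eq
    _ = (l + 1) * A.card ^ l := by simp

lemma pred_mul_lt {f n l : ℕ} (hb : 1 < b) (hf : ∀ a ∈ A, a ≤ f) (hf0 : 0 < f)
    (hn : Admissible b A n) (hnl : n < b ^ l) :
    (b - 1) * n < f * b ^ l := by
  have hdigits := ofDigits_mul_pred_add_le hb.le fun d hd => hf d (hn.1 d hd)
  rw [Nat.ofDigits_digits] at hdigits
  have := Nat.pow_le_pow_right (by omega : 0 < b) ((Nat.digits_length_le_iff hb n).2 hnl)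
  nlinarith

end Admissible

lemma kempnerMeasure_apply_le (b : ℕ) (A : Finset ℕ) {s : Set ℝ} (hs : MeasurableSet s) :
    kempnerMeasure b A s ≤ s.indicator 1 0 + ∑' l : ℕ, ((b : ℝ≥0∞) ^ l)⁻¹ *
      ∑' n : {n : ℕ // Admissible b A n}, s.indicator 1 ((n : ℝ) / (b : ℝ) ^ l) := by
  unfold kempnerMeasure
  split_ifs
  · simp [Measure.sum_apply _ hs, Measure.dirac_apply' _ hs]
  · simp only [Measure.add_apply, Measure.sum_apply _ hs, Measure.smul_apply, smul_eq_mul,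
      Measure.dirac_apply' _ hs]
    gcongr with l
    exact ENNReal.tsum_comp_le_tsum_of_injective
      (f := fun n : {n // Admissible b A n ∧ l ≤ (Nat.digits b n).length} =>
        (⟨n.1, n.2.1⟩ : {n // Admissible b A n}))
      (fun n m h => Subtype.ext (congrArg Subtype.val h :)) _

lemma kempnerMeasure_eq_zero {b : ℕ} {A : Finset ℕ} {s : Set ℝ} (hs : MeasurableSet s)
    (h0 : (0 : ℝ) ∉ s) (h : ∀ l n : ℕ, Admissible b A n → (n : ℝ) / b ^ l ∉ s) :
    kempnerMeasure b A s = 0 := by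
  refine le_antisymm ((kempnerMeasure_apply_le b A hs).trans_eq ?_) zero_le
  simpa [indicator_of_notMem h0] using h

lemma kempnerMeasure_singleton_ne_zero {b : ℕ} {A : Finset ℕ} {d : ℕ} (hd : d ∈ A)
    (hd0 : 0 < d) (hdb : d < b) : kempnerMeasure b A {(d : ℝ) / b} ≠ 0 := by
  have hdigits : Nat.digits b d = [d] := Nat.digits_of_lt b d hd0.ne' hdb
  have hadm : Admissible b A d := ⟨by simpa [hdigits], fun h => absurd h hd0.ne'⟩
  unfold kempnerMeasure
  split_ifs
  all_goals
    simp only [ne_eq, Measure.coe_add, Pi.add_apply, add_eq_zero, Measure.smul_apply, smul_eq_mul,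
      Measure.sum_apply_eq_zero' (measurableSet_singleton _), mul_eq_zero, not_forall, not_or,
      not_and]
  · exact ⟨1, by simp, ⟨d, hadm⟩, by simp⟩
  · exact fun _ => ⟨1, by simp, ⟨d, hadm, by simp [hdigits]⟩, by simp⟩

lemma tsum_indicator_Ico_le_card {b : ℕ} (hb : 0 < b) (A : Finset ℕ) (l : ℕ) :
    ∑' n : {n : ℕ // Admissible b A n},
        (Ico (0 : ℝ) 1).indicator (1 : ℝ → ℝ≥0∞) ((n : ℝ) / (b : ℝ) ^ l)
      ≤ ((Finset.range (b ^ l)).filter (Admissible b A)).card := by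
  set T := (Finset.range (b ^ l)).filter (Admissible b A)
  have hind : ∀ n : {n : ℕ // Admissible b A n},
      (Ico (0 : ℝ) 1).indicator (1 : ℝ → ℝ≥0∞) ((n : ℝ) / (b : ℝ) ^ l)
        = (T : Set ℕ).indicator 1 n := fun n => by
    simp [indicator_apply, natCast_div_pow_mem_Ico_iff hb, T, n.2]
  calc _ = ∑' n : {n // Admissible b A n}, (T : Set ℕ).indicator (1 : ℕ → ℝ≥0∞) n :=
        tsum_congr hind
    _ ≤ ∑' n : ℕ, (T : Set ℕ).indicator (1 : ℕ → ℝ≥0∞) n :=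
        ENNReal.tsum_comp_le_tsum_of_injective Subtype.val_injective _
    _ = T.card := by rw [← tsum_subtype]; simp

lemma kempnerMeasure_Ico_lt_top {b : ℕ} {A : Finset ℕ} (hb : 1 < b) (hAne : A.Nonempty)
    (hA : A.card < b) : kempnerMeasure b A (Ico 0 1) < ∞ := by
  have hr : (A.card : ℝ≥0∞) / b < 1 :=
    ENNReal.div_lt_of_lt_mul (by simpa using (Nat.cast_lt (α := ℝ≥0∞)).2 hA)
  calc kempnerMeasure b A (Ico 0 1)
      ≤ 1 + ∑' l : ℕ, ((b : ℝ≥0∞) ^ l)⁻¹ * ((l + 1) * A.card ^ l : ℕ) := by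
        refine (kempnerMeasure_apply_le b A measurableSet_Ico).trans
          (add_le_add (indicator_le_self' (fun _ _ => zero_le) _) ?_)
        gcongr with l
        exact (tsum_indicator_Ico_le_card (by omega) A l).trans
          (Nat.cast_le.2 (Admissible.card_filter_lt_pow_le hb hAne l))
    _ = 1 + ∑' l : ℕ, ((l : ℝ≥0∞) + 1) * (A.card / b) ^ l := by
        congr 1
        refine tsum_congr fun l => ?_
        rw [div_eq_mul_inv, mul_pow, ← ENNReal.inv_pow]
        push_cast
        ring
    _ < ∞ := ENNReal.add_lt_top.2 ⟨ENNReal.one_lt_top,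
        (ENNReal.tsum_add_one_mul_pow_ne_top hr).lt_top⟩

lemma ae_restrict_Ico_pred_mul_lt {b : ℕ} {A : Finset ℕ} {f : ℕ} (hb : 1 < b)
    (hf : ∀ a ∈ A, a ≤ f) (hf0 : 0 < f) :
    ∀ᵐ x ∂(kempnerMeasure b A).restrict (Ico 0 1), ((b : ℝ) - 1) * x < f := by
  rw [ae_restrict_iff' measurableSet_Ico, ae_iff]
  refine measure_mono_null (t := {x | (f : ℝ) ≤ (b - 1) * x} ∩ Ico 0 1)
    (fun x hx => by simp_all) (kempnerMeasure_eq_zero ?_ (by simpa using hf0.ne') ?_)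
  · exact (measurableSet_le measurable_const (measurable_const.mul measurable_id)).inter
      measurableSet_Ico
  · rintro l n hn ⟨hle, hmem⟩
    have hlt : (((b - 1) * n : ℕ) : ℝ) < ((f * b ^ l : ℕ) : ℝ) := Nat.cast_lt.2
      (hn.pred_mul_lt hb hf hf0 ((natCast_div_pow_mem_Ico_iff (by omega) n l).1 hmem))
    push_cast [Nat.cast_sub hb.le] at hlt
    rw [mem_ofPred_eq, ← mul_div_assoc, le_div_iff₀ (by positivity)] at hle
    linarith

noncomputable def scaledKempnerMeasure (b : ℕ) (A : Finset ℕ) (c : ℝ) : Measure ℝ :=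
  ((kempnerMeasure b A).restrict (Ico 0 1)).map (c * ·)

section scaledKempnerMeasure

variable {b : ℕ} {A : Finset ℕ}

lemma integral_pow_scaledKempnerMeasure {c : ℝ} (hc : c ≠ 0) (m : ℕ) :
    ∫ y, y ^ m ∂scaledKempnerMeasure b A c = c ^ m * moment b A m := by
  rw [scaledKempnerMeasure, (measurableEmbedding_mulLeft₀ hc).integral_map, moment,
    ← integral_const_mul]
  simp_rw [mul_pow]

lemma isFiniteMeasure_scaledKempnerMeasure (hb : 1 < b) (hAne : A.Nonempty) (hA : A.card < b)
    (c : ℝ) : IsFiniteMeasure (scaledKempnerMeasure b A c) :=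
  have : IsFiniteMeasure ((kempnerMeasure b A).restrict (Ico 0 1)) :=
    isFiniteMeasure_restrict.2 (kempnerMeasure_Ico_lt_top hb hAne hA).ne
  Measure.isFiniteMeasure_map _ _

variable {f : ℕ}

lemma ae_scaledKempnerMeasure_mem_Ico (hb : 1 < b) (hf : ∀ a ∈ A, a ≤ f) (hf0 : 0 < f) :
    ∀ᵐ y ∂scaledKempnerMeasure b A ((b - 1) / f), y ∈ Ico 0 1 := by
  have hc : 0 < ((b : ℝ) - 1) / f := div_pos (by simpa using hb) (by positivity)
  rw [scaledKempnerMeasure, (measurableEmbedding_mulLeft₀ hc.ne').ae_map_iff]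
  filter_upwards [ae_restrict_mem measurableSet_Ico, ae_restrict_Ico_pred_mul_lt hb hf hf0]
    with x hx hlt
  exact ⟨mul_nonneg hc.le hx.1, by rwa [div_mul_eq_mul_div, div_lt_one (by positivity)]⟩

lemma scaledKempnerMeasure_Ioo_ne_zero (hfA : f ∈ A) (hf0 : 0 < f) (hfb : f < b) :
    scaledKempnerMeasure b A ((b - 1) / f) (Ioo 0 1) ≠ 0 := by
  have hbR : (1 : ℝ) < b := by exact_mod_cast lt_of_le_of_lt hf0 hfb
  have hc : ((b : ℝ) - 1) / f ≠ 0 := div_ne_zero (by linarith) (by positivity)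
  have hfbI : (f : ℝ) / b ∈ Ico 0 1 :=
    ⟨by positivity, (div_lt_one (by positivity)).2 (by exact_mod_cast hfb)⟩
  have hcfb : ((b : ℝ) - 1) / f * (f / b) ∈ Ioo 0 1 := by
    rw [div_mul_div_cancel₀ (by positivity), mem_Ioo, div_lt_one (by positivity)]
    exact ⟨div_pos (by linarith) (by positivity), by linarith⟩
  rw [scaledKempnerMeasure, (measurableEmbedding_mulLeft₀ hc).map_apply]
  refine fun h0 => kempnerMeasure_singleton_ne_zero hfA hf0 hfb ?_
  rw [← inter_eq_left.2 (singleton_subset_iff.2 hfbI),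
    ← Measure.restrict_apply (measurableSet_singleton _)]
  exact measure_mono_null (singleton_subset_iff.2 hcfb) h0

end scaledKempnerMeasure

theorem kempner_scaled_moments_strictAnti (b : ℕ) (hb : 1 < b) (A : Finset ℕ)
    (hA : A ⊂ Finset.range b) (hAne : A.Nonempty) (hA0 : A ≠ {0}) :
    StrictAnti (fun m : ℕ =>
        (((b : ℝ) - 1) / ((A.max' hAne : ℕ) : ℝ)) ^ m * moment b A m)
      ∧ Filter.Tendsto (fun m : ℕ =>
          (((b : ℝ) - 1) / ((A.max' hAne : ℕ) : ℝ)) ^ m * moment b A m)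
          Filter.atTop (nhds 0) := by
  set f := A.max' hAne
  have hfA : f ∈ A := A.max'_mem hAne
  have hf0 : 0 < f := Finset.max'_pos_of_ne_singleton_zero hAne hA0
  have hfb : f < b := Finset.mem_range.1 (hA.1 hfA)
  have := isFiniteMeasure_scaledKempnerMeasure hb hAne
    (by simpa using Finset.card_lt_card hA) ((b - 1) / f)
  have hae := ae_scaledKempnerMeasure_mem_Ico hb (fun a ha => A.le_max' a ha) hf0
  have hc : ((b : ℝ) - 1) / f ≠ 0 := div_ne_zero (sub_ne_zero.2 (by exact_mod_cast hb.ne'))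
    (by positivity)
  simp only [← integral_pow_scaledKempnerMeasure (b := b) (A := A) hc]
  exact ⟨strictAnti_integral_pow hae (scaledKempnerMeasure_Ioo_ne_zero hfA hf0 hfb),
    tendsto_integral_pow_atTop <| hae.mono fun y hy => abs_lt.2 ⟨by linarith [hy.1], hy.2⟩⟩
end

section
/- Single-digit case: if A = {b−1} (so N = 1), then the moments of μ on [0,1) are u₀ = b/(b−1) and, for every m ≥ 1, u_m = Σ_{l=1}^∞ b^{−l} (1 − b^{−l})^m. -/
open MeasureTheory

/-!
The admissible integers are exactly the repunits `b ^ k - 1` (`k ≥ 1`), whose digits are all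
`b - 1`. An atom `n / b ^ l` with `l ≤ length n` lies in `[0, 1)` only when `n < b ^ l`, i.e.
`n = b ^ l - 1` with `l ≥ 1`. So on `[0, 1)` the measure is `δ₀` plus the atoms `1 - b⁻ˡ` of
mass `b⁻ˡ` for `l ≥ 1`, which gives every moment at once; for `m = 0` the masses form a
geometric series of sum `1 / (b - 1)`.
-/

open Set
open scoped ENNReal

theorem Nat.digits_pow_sub_one {b : ℕ} (hb : 1 < b) (k : ℕ) :
    b.digits (b ^ k - 1) = List.replicate k (b - 1) := by
  induction k with
  | zero => simp
  | succ k ih =>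
    have hsplit : b ^ (k + 1) - 1 = (b - 1) + b * (b ^ k - 1) := by
      have : b ≤ b * b ^ k := Nat.le_mul_of_pos_right b (by positivity)
      rw [pow_succ', Nat.mul_sub_one]
      omega
    rw [hsplit, Nat.digits_add b hb _ _ (by omega) (Or.inl (by omega)), ih,
      List.replicate_succ]

theorem admissible_singleton_sub_one_iff {b n : ℕ} (hb : 1 < b) :
    Admissible b {b - 1} n ↔ ∃ k, 0 < k ∧ n = b ^ k - 1 := by
  constructor
  · rintro ⟨hdigits, hzero⟩
    have hn : n ≠ 0 := fun h => by have := Finset.mem_singleton.mp (hzero h); omega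
    refine ⟨(b.digits n).length,
      List.length_pos_of_ne_nil (Nat.digits_ne_nil_iff_ne_zero.mpr hn), ?_⟩
    rw [← Nat.digits_inj_iff (b := b), Nat.digits_pow_sub_one hb, List.eq_replicate_iff]
    exact ⟨rfl, fun d hd => Finset.mem_singleton.mp (hdigits d hd)⟩
  · rintro ⟨k, hk, rfl⟩
    refine ⟨fun d hd => ?_, fun h => ?_⟩
    · rw [Nat.digits_pow_sub_one hb, List.mem_replicate] at hd
      exact Finset.mem_singleton.mpr hd.2
    · have : b ≤ b ^ k := Nat.le_self_pow hk.ne' b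
      omega

theorem lintegral_kempnerMeasure {b : ℕ} {A : Finset ℕ} (hA : 0 ∉ A) (g : ℝ → ℝ≥0∞) :
    ∫⁻ x, g x ∂kempnerMeasure b A
      = g 0 + ∑' l : ℕ, ((b : ℝ≥0∞) ^ l)⁻¹ *
          ∑' n : {n : ℕ // Admissible b A n ∧ l ≤ (b.digits n).length}, g (n / (b : ℝ) ^ l) := by
  simp only [kempnerMeasure, if_neg hA, lintegral_add_measure, lintegral_dirac,
    lintegral_sum_measure, lintegral_smul_measure, smul_eq_mul]

theorem tsum_indicator_Ico_kempner_atoms_zero {b : ℕ} {A : Finset ℕ} (hA : 0 ∉ A)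
    (f : ℝ → ℝ≥0∞) :
    ∑' n : {n : ℕ // Admissible b A n ∧ 0 ≤ (b.digits n).length},
      (Ico 0 1).indicator f (n / (b : ℝ) ^ 0) = 0 := by
  refine ENNReal.tsum_eq_zero.mpr fun ⟨n, hn, _⟩ => indicator_of_notMem (fun hmem => ?_) f
  have hn0 : n ≠ 0 := fun h => hA (hn.2 h)
  have : (n : ℝ) < 1 := by simpa using hmem.2
  exact hn0 (Nat.lt_one_iff.mp (by exact_mod_cast this))

theorem tsum_indicator_Ico_single_digit_atoms_succ {b : ℕ} (hb : 1 < b) (f : ℝ → ℝ≥0∞)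
    (l : ℕ) :
    ∑' n : {n : ℕ // Admissible b {b - 1} n ∧ l + 1 ≤ (b.digits n).length},
      (Ico 0 1).indicator f (n / (b : ℝ) ^ (l + 1)) = f (1 - ((b : ℝ) ^ (l + 1))⁻¹) := by
  have hbl : 0 < (b : ℝ) ^ (l + 1) := by positivity
  have hrepunit : Admissible b {b - 1} (b ^ (l + 1) - 1) ∧
      l + 1 ≤ (b.digits (b ^ (l + 1) - 1)).length :=
    ⟨(admissible_singleton_sub_one_iff hb).mpr ⟨l + 1, l.succ_pos, rfl⟩,
      by rw [Nat.digits_pow_sub_one hb, List.length_replicate]⟩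
  have hatom : ((b ^ (l + 1) - 1 : ℕ) : ℝ) / (b : ℝ) ^ (l + 1) = 1 - ((b : ℝ) ^ (l + 1))⁻¹ := by
    rw [Nat.cast_sub (Nat.one_le_pow _ _ (by omega)), sub_div, Nat.cast_pow, div_self hbl.ne',
      Nat.cast_one, one_div]
  rw [tsum_eq_single ⟨_, hrepunit⟩, hatom, indicator_of_mem]
  · exact ⟨sub_nonneg.mpr (inv_le_one_of_one_le₀ (one_le_pow₀ (by exact_mod_cast hb.le))),
      sub_lt_self _ (inv_pos.mpr hbl)⟩
  rintro ⟨n, hn, hlen⟩ hne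
  refine indicator_of_notMem (fun hmem => hne ?_) f
  have hlt : n < b ^ (l + 1) := by exact_mod_cast (div_lt_one hbl).mp hmem.2
  obtain ⟨k, -, rfl⟩ := (admissible_singleton_sub_one_iff hb).mp hn
  have hlen_le := (Nat.digits_length_le_iff hb _).mpr hlt
  rw [Nat.digits_pow_sub_one hb, List.length_replicate] at hlen hlen_le
  obtain rfl : k = l + 1 := le_antisymm hlen_le hlen
  rfl

theorem lintegral_Ico_kempnerMeasure_single_digit {b : ℕ} (hb : 1 < b) (f : ℝ → ℝ≥0∞) :
    ∫⁻ x in Ico 0 1, f x ∂kempnerMeasure b {b - 1}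
      = f 0 + ∑' l : ℕ, ((b : ℝ≥0∞) ^ (l + 1))⁻¹ * f (1 - ((b : ℝ) ^ (l + 1))⁻¹) := by
  have hA : 0 ∉ ({b - 1} : Finset ℕ) := by rw [Finset.mem_singleton]; omega
  rw [← lintegral_indicator measurableSet_Ico, lintegral_kempnerMeasure hA,
    tsum_eq_zero_add' ENNReal.summable, tsum_indicator_Ico_kempner_atoms_zero hA,
    indicator_of_mem (left_mem_Ico.mpr zero_lt_one), mul_zero, zero_add]
  simp only [tsum_indicator_Ico_single_digit_atoms_succ hb]

theorem hasSum_inv_pow_succ {b : ℝ} (hb : 1 < b) :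
    HasSum (fun l : ℕ => (b ^ (l + 1))⁻¹) (b - 1)⁻¹ := by
  have hgeom := (hasSum_geometric_of_lt_one (inv_nonneg.mpr (by positivity))
    (inv_lt_one_of_one_lt₀ hb)).mul_left b⁻¹
  have hval : b⁻¹ * (1 - b⁻¹)⁻¹ = (b - 1)⁻¹ := by
    have : b - 1 ≠ 0 := sub_ne_zero.mpr hb.ne'
    field_simp
  rw [hval] at hgeom
  exact hgeom.congr_fun fun l => by rw [← inv_pow, pow_succ']

theorem moment_single_digit {b : ℕ} (hb : 1 < b) (m : ℕ) :
    moment b {b - 1} m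
      = 0 ^ m + ∑' l : ℕ, ((b : ℝ) ^ (l + 1))⁻¹ * (1 - ((b : ℝ) ^ (l + 1))⁻¹) ^ m := by
  have hbR : (1 : ℝ) < b := by exact_mod_cast hb
  have hinv : ∀ l : ℕ, 0 ≤ ((b : ℝ) ^ (l + 1))⁻¹ ∧ ((b : ℝ) ^ (l + 1))⁻¹ ≤ 1 := fun l =>
    ⟨by positivity, inv_le_one_of_one_le₀ (one_le_pow₀ hbR.le)⟩
  have hterm_nonneg : ∀ l : ℕ, 0 ≤ ((b : ℝ) ^ (l + 1))⁻¹ * (1 - ((b : ℝ) ^ (l + 1))⁻¹) ^ m :=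
    fun l => mul_nonneg (hinv l).1 (pow_nonneg (sub_nonneg.mpr (hinv l).2) m)
  have hsummable :
      Summable fun l : ℕ => ((b : ℝ) ^ (l + 1))⁻¹ * (1 - ((b : ℝ) ^ (l + 1))⁻¹) ^ m :=
    (hasSum_inv_pow_succ hbR).summable.of_nonneg_of_le hterm_nonneg fun l =>
      mul_le_of_le_one_right (hinv l).1
        (pow_le_one₀ (sub_nonneg.mpr (hinv l).2) (sub_le_self _ (hinv l).1))
  have hcoeff : ∀ l : ℕ, ((b : ℝ≥0∞) ^ (l + 1))⁻¹ = ENNReal.ofReal ((b : ℝ) ^ (l + 1))⁻¹ := by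
    intro l
    rw [ENNReal.ofReal_inv_of_pos (by positivity), ENNReal.ofReal_pow (by positivity),
      ENNReal.ofReal_natCast]
  rw [moment, integral_eq_lintegral_of_nonneg_ae
      (ae_restrict_of_forall_mem measurableSet_Ico fun x hx => pow_nonneg hx.1 m)
      (measurable_id.pow_const m).aestronglyMeasurable,
    lintegral_Ico_kempnerMeasure_single_digit hb]
  simp only [hcoeff, ← ENNReal.ofReal_mul (hinv _).1]
  rw [← ENNReal.ofReal_tsum_of_nonneg hterm_nonneg hsummable,
    ← ENNReal.ofReal_add (pow_nonneg le_rfl m) (tsum_nonneg hterm_nonneg),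
    ENNReal.toReal_ofReal (add_nonneg (pow_nonneg le_rfl m) (tsum_nonneg hterm_nonneg))]

theorem kempner_single_digit_moments (b : ℕ) (hb : 1 < b) :
    moment b {b - 1} 0 = (b : ℝ) / ((b : ℝ) - 1)
      ∧ ∀ m : ℕ, 1 ≤ m →
          moment b {b - 1} m
            = ∑' l : ℕ, ((b : ℝ) ^ (l + 1))⁻¹ * (1 - ((b : ℝ) ^ (l + 1))⁻¹) ^ m := by
  have hbR : (1 : ℝ) < b := by exact_mod_cast hb
  refine ⟨?_, fun m hm => ?_⟩
  · simp only [moment_single_digit hb, pow_zero, mul_one, (hasSum_inv_pow_succ hbR).tsum_eq]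
    have : (b : ℝ) - 1 ≠ 0 := sub_ne_zero.mpr hbR.ne'
    field_simp
    ring
  · rw [moment_single_digit hb, zero_pow (by omega), zero_add]
end

section
/- For every integer b > 1 and every integer m ≥ 1, one has the strict inequality 1/(m+1) = ∫_0^1 t^m dt < (1 − b^{−1}) b Σ_{l=1}^∞ b^{−l} (1 − b^{−l})^m; consequently (m+1)(1 − b^{−1}) Σ_{l=1}^∞ b^{−l}(1 − b^{−l})^m > b^{−1}. -/
/-! With `x = b⁻¹`, the increments `(1 - x^(l+1))^(m+1) - (1 - x^l)^(m+1)` telescope to `1`, and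
since `m ≥ 1` each is strictly less than `(m+1) (x^l - x^(l+1)) (1 - x^(l+1))^m`, which equals
`(m+1) (b-1) x^(l+1) (1 - x^(l+1))^m`. Summing over `l` gives `1 < (m+1) (b-1) Σ`. -/

open Finset Filter Topology

theorem pow_succ_sub_pow_succ_lt {α : Type*} [CommRing α] [LinearOrder α] [IsStrictOrderedRing α]
    {a c : α} (ha : 0 ≤ a) (hac : a < c) {m : ℕ} (hm : 1 ≤ m) :
    c ^ (m + 1) - a ^ (m + 1) < (m + 1) * (c - a) * c ^ m := by
  have hterm_le (i : ℕ) (hi : i ∈ range (m + 1)) : c ^ i * a ^ (m - i) ≤ c ^ m := by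
    calc c ^ i * a ^ (m - i) ≤ c ^ i * c ^ (m - i) := by
          gcongr; exact pow_nonneg (ha.trans hac.le) i
      _ = c ^ m := by rw [← pow_add, Nat.add_sub_cancel' (Nat.lt_succ_iff.1 (mem_range.1 hi))]
  have hterm_lt : c ^ 0 * a ^ (m - 0) < c ^ m := by
    simpa using pow_lt_pow_left₀ hac ha (by omega)
  have hgeom : ∑ i ∈ range (m + 1), c ^ i * a ^ (m - i) < ∑ _i ∈ range (m + 1), c ^ m :=
    sum_lt_sum hterm_le ⟨0, by simp, hterm_lt⟩
  rw [sum_const, card_range, nsmul_eq_mul, Nat.cast_succ] at hgeom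
  calc c ^ (m + 1) - a ^ (m + 1) = (∑ i ∈ range (m + 1), c ^ i * a ^ (m - i)) * (c - a) :=
        (geom_sum₂_mul c a (m + 1)).symm
    _ < (m + 1) * c ^ m * (c - a) := by gcongr
    _ = (m + 1) * (c - a) * c ^ m := by ring

theorem Monotone.hasSum_sub_of_tendsto {f : ℕ → ℝ} {l : ℝ} (hf : Monotone f)
    (hl : Tendsto f atTop (𝓝 l)) : HasSum (fun n ↦ f (n + 1) - f n) (l - f 0) := by
  rw [hasSum_iff_tendsto_nat_of_nonneg fun n ↦ sub_nonneg.2 (hf n.le_succ)]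
  simpa only [sum_range_sub] using hl.sub_const (f 0)

section

variable {x : ℝ} (hx₀ : 0 < x) (hx₁ : x < 1)
include hx₀ hx₁

theorem summable_pow_succ_mul_one_sub_pow_succ_pow (m : ℕ) :
    Summable fun l : ℕ ↦ x ^ (l + 1) * (1 - x ^ (l + 1)) ^ m := by
  refine .of_nonneg_of_le (fun l ↦ ?_) (fun l ↦ ?_)
    ((summable_geometric_of_lt_one hx₀.le hx₁).mul_left x)
  · have := pow_le_one₀ (n := l + 1) hx₀.le hx₁.le
    positivity
  · rw [← pow_succ']
    have h₀ : 0 ≤ 1 - x ^ (l + 1) := sub_nonneg.2 (pow_le_one₀ hx₀.le hx₁.le)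
    have h₁ : 1 - x ^ (l + 1) ≤ 1 := sub_le_self _ (by positivity)
    exact mul_le_of_le_one_right (by positivity) (pow_le_one₀ h₀ h₁)

theorem hasSum_one_sub_pow_succ_pow_sub (n : ℕ) :
    HasSum (fun l : ℕ ↦ (1 - x ^ (l + 1)) ^ (n + 1) - (1 - x ^ l) ^ (n + 1)) 1 := by
  have hmono : Monotone fun l : ℕ ↦ (1 - x ^ l) ^ (n + 1) := by
    refine monotone_nat_of_le_succ fun l ↦ pow_le_pow_left₀ ?_ ?_ _
    · exact sub_nonneg.2 (pow_le_one₀ hx₀.le hx₁.le)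
    · exact sub_le_sub_left (pow_le_pow_of_le_one hx₀.le hx₁.le l.le_succ) 1
  have hlim : Tendsto (fun l : ℕ ↦ (1 - x ^ l) ^ (n + 1)) atTop (𝓝 1) := by
    simpa using ((tendsto_pow_atTop_nhds_zero_of_lt_one hx₀.le hx₁).const_sub 1).pow (n + 1)
  simpa using hmono.hasSum_sub_of_tendsto hlim

theorem lt_mul_tsum_pow_succ_mul_one_sub_pow_succ_pow {m : ℕ} (hm : 1 ≤ m) :
    x < (m + 1) * (1 - x) * ∑' l : ℕ, x ^ (l + 1) * (1 - x ^ (l + 1)) ^ m := by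
  have hincr (l : ℕ) : x * ((1 - x ^ (l + 1)) ^ (m + 1) - (1 - x ^ l) ^ (m + 1))
      < (m + 1) * (1 - x) * (x ^ (l + 1) * (1 - x ^ (l + 1)) ^ m) := by
    have hlt : 1 - x ^ l < 1 - x ^ (l + 1) :=
      sub_lt_sub_left (pow_lt_pow_right_of_lt_one₀ hx₀ hx₁ l.lt_succ_self) 1
    have := pow_succ_sub_pow_succ_lt (sub_nonneg.2 (pow_le_one₀ hx₀.le hx₁.le)) hlt hm
    calc _ < x * ((m + 1) * ((1 - x ^ (l + 1)) - (1 - x ^ l)) * (1 - x ^ (l + 1)) ^ m) := by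
          gcongr
      _ = _ := by ring
  have hsum := (hasSum_one_sub_pow_succ_pow_sub hx₀ hx₁ m).mul_left x
  rw [mul_one] at hsum
  exact hasSum_lt (fun l ↦ (hincr l).le) (hincr 0) hsum
    ((summable_pow_succ_mul_one_sub_pow_succ_pow hx₀ hx₁ m).hasSum.mul_left _)

end

theorem single_digit_moment_lower_bound (b : ℕ) (hb : 1 < b) (m : ℕ) (hm : 1 ≤ m) :
    ((m : ℝ) + 1)⁻¹ = ∫ t in (0 : ℝ)..1, t ^ m
      ∧ (∫ t in (0 : ℝ)..1, t ^ m)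
          < (1 - (b : ℝ)⁻¹) * (b : ℝ) *
              ∑' l : ℕ, ((b : ℝ) ^ (l + 1))⁻¹ * (1 - ((b : ℝ) ^ (l + 1))⁻¹) ^ m
      ∧ ((m : ℝ) + 1) * (1 - (b : ℝ)⁻¹) *
            ∑' l : ℕ, ((b : ℝ) ^ (l + 1))⁻¹ * (1 - ((b : ℝ) ^ (l + 1))⁻¹) ^ m
          > (b : ℝ)⁻¹ := by
  have hb₁ : (1 : ℝ) < b := by exact_mod_cast hb
  have hb₀ : (0 : ℝ) < b := zero_lt_one.trans hb₁
  have key := lt_mul_tsum_pow_succ_mul_one_sub_pow_succ_pow (inv_pos.2 hb₀)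
    (inv_lt_one_of_one_lt₀ hb₁) hm
  simp only [← inv_pow] at key ⊢
  set S := ∑' l : ℕ, (b : ℝ)⁻¹ ^ (l + 1) * (1 - (b : ℝ)⁻¹ ^ (l + 1)) ^ m
  have hintegral : ∫ t in (0 : ℝ)..1, t ^ m = ((m : ℝ) + 1)⁻¹ := by simp [integral_pow]
  refine ⟨hintegral.symm, ?_, key⟩
  rw [hintegral]
  calc ((m : ℝ) + 1)⁻¹ = (b : ℝ)⁻¹ * b / (m + 1) := by rw [inv_mul_cancel₀ hb₀.ne', inv_eq_one_div]
    _ < (m + 1) * (1 - (b : ℝ)⁻¹) * S * b / (m + 1) := by gcongr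
    _ = (1 - (b : ℝ)⁻¹) * b * S := by field_simp
end
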